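/- arXiv:2103.09735 — 3 statements merged into one kernel-verified Lean document; each statement's English description precedes it below -/
import Mathlib

section
/- Suppose a finite set OPT of items admits a guillotine-separable packing into the N×N knapsack and contains a massive item m. Then there is a guillotine-separable repacking of all items of OPT in which m occupies the top-right corner [N−w(m),N]×[N−h(m),N] of the knapsack and all remaining items lie inside the boundary-L region ([0,N]×[0,N−h(m)]) ∪ ([0,N−w(m)]×[0,N]). -/
/-- An axis-aligned rectangle, given by the coordinates of its corners. -/
structure Rect where
  x1 : ℝ
  x2 : ℝ
  y1 : ℝ
  y2 : ℝ

namespace Rect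

def width (r : Rect) : ℝ := r.x2 - r.x1

def height (r : Rect) : ℝ := r.y2 - r.y1

def area (r : Rect) : ℝ := r.width * r.height

/-- The open interior of an axis-aligned rectangle. -/
def toSet (r : Rect) : Set (ℝ × ℝ) :=
  {p : ℝ × ℝ | r.x1 < p.1 ∧ p.1 < r.x2 ∧ r.y1 < p.2 ∧ p.2 < r.y2}

/-- `r.SubRect s` : the rectangle `r` is contained in the rectangle `s`. -/
def SubRect (r s : Rect) : Prop :=
  s.x1 ≤ r.x1 ∧ r.x2 ≤ s.x2 ∧ s.y1 ≤ r.y1 ∧ r.y2 ≤ s.y2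

noncomputable instance (r s : Rect) : Decidable (r.SubRect s) :=
  inferInstanceAs (Decidable (s.x1 ≤ r.x1 ∧ r.x2 ≤ s.x2 ∧ s.y1 ≤ r.y1 ∧ r.y2 ≤ s.y2))

end Rect

/-- The square knapsack `[0,N] × [0,N]`. -/
def knapsack (N : ℝ) : Rect := ⟨0, N, 0, N⟩

/-- A placement of the items of `S` (with prescribed widths and heights) as
pairwise non-overlapping axis-aligned rectangles inside the piece `P`. -/
structure IsPacking {ι : Type*} (wd ht : ι → ℝ) (S : Finset ι)
    (place : ι → Rect) (P : Rect) : Prop where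
  hw : ∀ i ∈ S, (place i).width = wd i
  hh : ∀ i ∈ S, (place i).height = ht i
  hin : ∀ i ∈ S, (place i).SubRect P
  hdisj : ∀ i ∈ S, ∀ j ∈ S, i ≠ j → Disjoint (place i).toSet (place j).toSet

/-- Guillotine separability of the placed items of `S` inside the piece `P`:
either the piece contains at most one item, or some axis-parallel end-to-end cut
splits the piece into two rectangular subpieces, crossing the interior of no item,
and the items of each subpiece are recursively guillotine separable. -/
inductive GuillotineSep {ι : Type*} (place : ι → Rect) : Rect → Finset ι → Prop
  | base (P : Rect) (S : Finset ι) (hS : S.card ≤ 1) : GuillotineSep place P S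
  | vcut (P : Rect) (S : Finset ι) (c : ℝ) (h1 : P.x1 < c) (h2 : c < P.x2)
      (hcross : ∀ i ∈ S, (place i).x2 ≤ c ∨ c ≤ (place i).x1)
      (hL : GuillotineSep place ⟨P.x1, c, P.y1, P.y2⟩
              (S.filter fun i => (place i).x2 ≤ c))
      (hR : GuillotineSep place ⟨c, P.x2, P.y1, P.y2⟩
              (S.filter fun i => ¬ (place i).x2 ≤ c)) :
      GuillotineSep place P S
  | hcut (P : Rect) (S : Finset ι) (c : ℝ) (h1 : P.y1 < c) (h2 : c < P.y2)
      (hcross : ∀ i ∈ S, (place i).y2 ≤ c ∨ c ≤ (place i).y1)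
      (hB : GuillotineSep place ⟨P.x1, P.x2, P.y1, c⟩
              (S.filter fun i => (place i).y2 ≤ c))
      (hT : GuillotineSep place ⟨P.x1, P.x2, c, P.y2⟩
              (S.filter fun i => ¬ (place i).y2 ≤ c)) :
      GuillotineSep place P S

/-- A guillotine-separable packing of the items of `S` into the piece `P`. -/
def GuillotinePacking {ι : Type*} (wd ht : ι → ℝ) (S : Finset ι)
    (place : ι → Rect) (P : Rect) : Prop :=
  IsPacking wd ht S place P ∧ GuillotineSep place P S

namespace Rect

def translate (r : Rect) (dx dy : ℝ) : Rect := ⟨r.x1 + dx, r.x2 + dx, r.y1 + dy, r.y2 + dy⟩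

@[simp] lemma translate_x1 (r : Rect) (dx dy : ℝ) : (r.translate dx dy).x1 = r.x1 + dx := rfl
@[simp] lemma translate_x2 (r : Rect) (dx dy : ℝ) : (r.translate dx dy).x2 = r.x2 + dx := rfl
@[simp] lemma translate_y1 (r : Rect) (dx dy : ℝ) : (r.translate dx dy).y1 = r.y1 + dy := rfl
@[simp] lemma translate_y2 (r : Rect) (dx dy : ℝ) : (r.translate dx dy).y2 = r.y2 + dy := rfl

@[simp] lemma translate_width (r : Rect) (dx dy : ℝ) : (r.translate dx dy).width = r.width := by
  simp [width, translate]

@[simp] lemma translate_height (r : Rect) (dx dy : ℝ) : (r.translate dx dy).height = r.height := by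
  simp [height, translate]

lemma disjoint_of_sepX {r s : Rect} {c : ℝ} (h1 : r.x2 ≤ c) (h2 : c ≤ s.x1) :
    Disjoint r.toSet s.toSet := by
  rw [Set.disjoint_left]
  intro p hp hq
  simp only [toSet, Set.mem_setOf_eq] at hp hq
  obtain ⟨_, hp2, _, _⟩ := hp
  obtain ⟨hq1, _, _, _⟩ := hq
  linarith

lemma disjoint_of_sepY {r s : Rect} {c : ℝ} (h1 : r.y2 ≤ c) (h2 : c ≤ s.y1) :
    Disjoint r.toSet s.toSet := by
  rw [Set.disjoint_left]
  intro p hp hq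
  simp only [toSet, Set.mem_setOf_eq] at hp hq
  obtain ⟨_, _, _, hp4⟩ := hp
  obtain ⟨_, _, hq3, _⟩ := hq
  linarith

lemma disjoint_translate {r s : Rect} (h : Disjoint r.toSet s.toSet) (dx dy : ℝ) :
    Disjoint (r.translate dx dy).toSet (s.translate dx dy).toSet := by
  rw [Set.disjoint_left] at h ⊢
  intro p hp hq
  simp only [toSet, translate, Set.mem_setOf_eq] at hp hq
  obtain ⟨hp1, hp2, hp3, hp4⟩ := hp
  obtain ⟨hq1, hq2, hq3, hq4⟩ := hq
  exact h (a := (p.1 - dx, p.2 - dy))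
    ⟨by show r.x1 < p.1 - dx; linarith, by show p.1 - dx < r.x2; linarith,
     by show r.y1 < p.2 - dy; linarith, by show p.2 - dy < r.y2; linarith⟩
    ⟨by show s.x1 < p.1 - dx; linarith, by show p.1 - dx < s.x2; linarith,
     by show s.y1 < p.2 - dy; linarith, by show p.2 - dy < s.y2; linarith⟩

lemma translate_subRect {r s : Rect} {dx dy : ℝ}
    (h1 : s.x1 ≤ r.x1 + dx) (h2 : r.x2 + dx ≤ s.x2)
    (h3 : s.y1 ≤ r.y1 + dy) (h4 : r.y2 + dy ≤ s.y2) :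
    (r.translate dx dy).SubRect s := ⟨h1, h2, h3, h4⟩

end Rect

section Aux

variable {ι : Type*}

lemma gs_congr {place : ι → Rect} {P : Rect} {S : Finset ι}
    (h : GuillotineSep place P S) :
    ∀ (place' : ι → Rect), (∀ i ∈ S, place' i = place i) → GuillotineSep place' P S := by
  induction h with
  | base P S hS => exact fun place' _ => .base P S hS
  | vcut P S c h1 h2 hcross hL hR ihL ihR =>
    intro place' hag
    refine GuillotineSep.vcut P S c h1 h2 (fun i hi => by rw [hag i hi]; exact hcross i hi) ?_ ?_
    · have e : S.filter (fun i => (place' i).x2 ≤ c) = S.filter (fun i => (place i).x2 ≤ c) :=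
        Finset.filter_congr (fun i hi => by rw [hag i hi])
      rw [e]
      exact ihL place' (fun i hi => hag i (Finset.mem_filter.mp hi).1)
    · have e : S.filter (fun i => ¬ (place' i).x2 ≤ c) = S.filter (fun i => ¬ (place i).x2 ≤ c) :=
        Finset.filter_congr (fun i hi => by rw [hag i hi])
      rw [e]
      exact ihR place' (fun i hi => hag i (Finset.mem_filter.mp hi).1)
  | hcut P S c h1 h2 hcross hB hT ihB ihT =>
    intro place' hag
    refine GuillotineSep.hcut P S c h1 h2 (fun i hi => by rw [hag i hi]; exact hcross i hi) ?_ ?_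
    · have e : S.filter (fun i => (place' i).y2 ≤ c) = S.filter (fun i => (place i).y2 ≤ c) :=
        Finset.filter_congr (fun i hi => by rw [hag i hi])
      rw [e]
      exact ihB place' (fun i hi => hag i (Finset.mem_filter.mp hi).1)
    · have e : S.filter (fun i => ¬ (place' i).y2 ≤ c) = S.filter (fun i => ¬ (place i).y2 ≤ c) :=
        Finset.filter_congr (fun i hi => by rw [hag i hi])
      rw [e]
      exact ihT place' (fun i hi => hag i (Finset.mem_filter.mp hi).1)

lemma gs_translate_congr {place : ι → Rect} {P : Rect} {S : Finset ι}
    (h : GuillotineSep place P S) :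
    ∀ (dx dy : ℝ) (place' : ι → Rect), (∀ i ∈ S, place' i = (place i).translate dx dy) →
      GuillotineSep place' (P.translate dx dy) S := by
  induction h with
  | base P S hS => exact fun _ _ _ _ => .base _ _ hS
  | vcut P S c h1 h2 hcross hL hR ihL ihR =>
    intro dx dy place' hag
    refine GuillotineSep.vcut _ S (c + dx) (by simpa using add_lt_add_right h1 dx)
      (by simpa using add_lt_add_right h2 dx) ?_ ?_ ?_
    · intro i hi
      rw [hag i hi]
      rcases hcross i hi with h | h
      · exact Or.inl (by simpa using add_le_add_right h dx)
      · exact Or.inr (by simpa using add_le_add_right h dx)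
    · have e : S.filter (fun i => (place' i).x2 ≤ c + dx) = S.filter (fun i => (place i).x2 ≤ c) :=
        Finset.filter_congr (fun i hi => by rw [hag i hi]; simp)
      rw [e]
      exact ihL dx dy place' (fun i hi => hag i (Finset.mem_filter.mp hi).1)
    · have e : S.filter (fun i => ¬ (place' i).x2 ≤ c + dx)
          = S.filter (fun i => ¬ (place i).x2 ≤ c) :=
        Finset.filter_congr (fun i hi => by rw [hag i hi]; simp)
      rw [e]
      exact ihR dx dy place' (fun i hi => hag i (Finset.mem_filter.mp hi).1)
  | hcut P S c h1 h2 hcross hB hT ihB ihT =>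
    intro dx dy place' hag
    refine GuillotineSep.hcut _ S (c + dy) (by simpa using add_lt_add_right h1 dy)
      (by simpa using add_lt_add_right h2 dy) ?_ ?_ ?_
    · intro i hi
      rw [hag i hi]
      rcases hcross i hi with h | h
      · exact Or.inl (by simpa using add_le_add_right h dy)
      · exact Or.inr (by simpa using add_le_add_right h dy)
    · have e : S.filter (fun i => (place' i).y2 ≤ c + dy) = S.filter (fun i => (place i).y2 ≤ c) :=
        Finset.filter_congr (fun i hi => by rw [hag i hi]; simp)
      rw [e]
      exact ihB dx dy place' (fun i hi => hag i (Finset.mem_filter.mp hi).1)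
    · have e : S.filter (fun i => ¬ (place' i).y2 ≤ c + dy)
          = S.filter (fun i => ¬ (place i).y2 ≤ c) :=
        Finset.filter_congr (fun i hi => by rw [hag i hi]; simp)
      rw [e]
      exact ihT dx dy place' (fun i hi => hag i (Finset.mem_filter.mp hi).1)

/-- A variant of the `vcut` constructor where the two parts are given as
arbitrary finsets characterized by the cut. -/
lemma gs_vcut' {place : ι → Rect} {P : Rect} {S : Finset ι} (c : ℝ)
    (h1 : P.x1 < c) (h2 : c < P.x2)
    (hcross : ∀ i ∈ S, (place i).x2 ≤ c ∨ c ≤ (place i).x1)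
    (A B : Finset ι) (hA : A ⊆ S) (hB : B ⊆ S)
    (hAmem : ∀ i ∈ S, ((place i).x2 ≤ c ↔ i ∈ A))
    (hBmem : ∀ i ∈ S, (¬ (place i).x2 ≤ c ↔ i ∈ B))
    (hLg : GuillotineSep place ⟨P.x1, c, P.y1, P.y2⟩ A)
    (hRg : GuillotineSep place ⟨c, P.x2, P.y1, P.y2⟩ B) :
    GuillotineSep place P S := by
  refine GuillotineSep.vcut P S c h1 h2 hcross ?_ ?_
  · have e : S.filter (fun i => (place i).x2 ≤ c) = A := by
      ext i
      simp only [Finset.mem_filter]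
      constructor
      · rintro ⟨hi, hx⟩; exact (hAmem i hi).1 hx
      · intro hiA; exact ⟨hA hiA, (hAmem i (hA hiA)).2 hiA⟩
    rwa [e]
  · have e : S.filter (fun i => ¬ (place i).x2 ≤ c) = B := by
      ext i
      simp only [Finset.mem_filter]
      constructor
      · rintro ⟨hi, hx⟩; exact (hBmem i hi).1 hx
      · intro hiB; exact ⟨hB hiB, (hBmem i (hB hiB)).2 hiB⟩
    rwa [e]

lemma gs_hcut' {place : ι → Rect} {P : Rect} {S : Finset ι} (c : ℝ)
    (h1 : P.y1 < c) (h2 : c < P.y2)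
    (hcross : ∀ i ∈ S, (place i).y2 ≤ c ∨ c ≤ (place i).y1)
    (A B : Finset ι) (hA : A ⊆ S) (hB : B ⊆ S)
    (hAmem : ∀ i ∈ S, ((place i).y2 ≤ c ↔ i ∈ A))
    (hBmem : ∀ i ∈ S, (¬ (place i).y2 ≤ c ↔ i ∈ B))
    (hLg : GuillotineSep place ⟨P.x1, P.x2, P.y1, c⟩ A)
    (hRg : GuillotineSep place ⟨P.x1, P.x2, c, P.y2⟩ B) :
    GuillotineSep place P S := by
  refine GuillotineSep.hcut P S c h1 h2 hcross ?_ ?_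
  · have e : S.filter (fun i => (place i).y2 ≤ c) = A := by
      ext i
      simp only [Finset.mem_filter]
      constructor
      · rintro ⟨hi, hx⟩; exact (hAmem i hi).1 hx
      · intro hiA; exact ⟨hA hiA, (hAmem i (hA hiA)).2 hiA⟩
    rwa [e]
  · have e : S.filter (fun i => ¬ (place i).y2 ≤ c) = B := by
      ext i
      simp only [Finset.mem_filter]
      constructor
      · rintro ⟨hi, hx⟩; exact (hBmem i hi).1 hx
      · intro hiB; exact ⟨hB hiB, (hBmem i (hB hiB)).2 hiB⟩
    rwa [e]

end Aux
/-- **Repacking lemma (no special item).** Any guillotine-separable packing of a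
piece can be repacked (preserving dimensions) so that, in addition, every item's
right and top edges are strictly inside the piece's left/bottom boundary. -/
lemma lemA {ι : Type*} {place : ι → Rect} {P : Rect} {S : Finset ι}
    (h : GuillotineSep place P S) :
    P.x1 < P.x2 → P.y1 < P.y2 →
    (∀ i ∈ S, (place i).SubRect P) →
    (∀ i ∈ S, ∀ j ∈ S, i ≠ j → Disjoint (place i).toSet (place j).toSet) →
    ∃ place' : ι → Rect,
      (∀ i ∈ S, (place' i).width = (place i).width ∧ (place' i).height = (place i).height) ∧
      (∀ i ∈ S, (place' i).SubRect P ∧ P.x1 < (place' i).x2 ∧ P.y1 < (place' i).y2) ∧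
      (∀ i ∈ S, ∀ j ∈ S, i ≠ j → Disjoint (place' i).toSet (place' j).toSet) ∧
      GuillotineSep place' P S := by
  induction h with
  | base P S hS =>
    intro hPx hPy hsub _hdis
    refine ⟨fun i => ⟨P.x2 - (place i).width, P.x2, P.y2 - (place i).height, P.y2⟩,
      ?_, ?_, ?_, .base P S hS⟩
    · intro i hi
      constructor <;> simp [Rect.width, Rect.height]
    · intro i hi
      obtain ⟨h1, h2, h3, h4⟩ := hsub i hi
      simp only [Rect.SubRect, Rect.width, Rect.height]
      refine ⟨⟨by linarith, le_refl _, by linarith, le_refl _⟩, hPx, hPy⟩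
    · intro i hi j hj hij
      exact absurd (Finset.card_le_one.mp hS i hi j hj) hij
  | vcut P S c h1 h2 hcross hL hR ihL ihR =>
    intro hPx hPy hsub hdis
    have hsubL : ∀ i ∈ S.filter (fun i => (place i).x2 ≤ c),
        (place i).SubRect (⟨P.x1, c, P.y1, P.y2⟩ : Rect) := by
      intro i hi
      obtain ⟨hi, hx⟩ := Finset.mem_filter.mp hi
      obtain ⟨s1, s2, s3, s4⟩ := hsub i hi
      exact ⟨s1, hx, s3, s4⟩
    have hsubR : ∀ i ∈ S.filter (fun i => ¬ (place i).x2 ≤ c),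
        (place i).SubRect (⟨c, P.x2, P.y1, P.y2⟩ : Rect) := by
      intro i hi
      obtain ⟨hi, hx⟩ := Finset.mem_filter.mp hi
      obtain ⟨s1, s2, s3, s4⟩ := hsub i hi
      exact ⟨(hcross i hi).resolve_left hx, s2, s3, s4⟩
    obtain ⟨pA, dimA, subA, disA, gsA⟩ := ihL h1 hPy hsubL
      (fun i hi j hj hij => hdis i (Finset.mem_filter.mp hi).1 j (Finset.mem_filter.mp hj).1 hij)
    obtain ⟨pB, dimB, subB, disB, gsB⟩ := ihR h2 hPy hsubR
      (fun i hi j hj hij => hdis i (Finset.mem_filter.mp hi).1 j (Finset.mem_filter.mp hj).1 hij)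
    classical
    refine ⟨fun i => if (place i).x2 ≤ c then pA i else pB i, ?_, ?_, ?_, ?_⟩
    · intro i hi
      by_cases hx : (place i).x2 ≤ c
      · simp only [if_pos hx]; exact dimA i (Finset.mem_filter.mpr ⟨hi, hx⟩)
      · simp only [if_neg hx]; exact dimB i (Finset.mem_filter.mpr ⟨hi, hx⟩)
    · intro i hi
      by_cases hx : (place i).x2 ≤ c
      · simp only [if_pos hx]
        obtain ⟨⟨s1, s2, s3, s4⟩, st1, st2⟩ := subA i (Finset.mem_filter.mpr ⟨hi, hx⟩)
        exact ⟨⟨s1, by linarith, s3, s4⟩, st1, st2⟩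
      · simp only [if_neg hx]
        obtain ⟨⟨s1, s2, s3, s4⟩, st1, st2⟩ := subB i (Finset.mem_filter.mpr ⟨hi, hx⟩)
        exact ⟨⟨by linarith, s2, s3, s4⟩, by linarith, st2⟩
    · intro i hi j hj hij
      by_cases hx : (place i).x2 ≤ c <;> by_cases hy : (place j).x2 ≤ c
      · simp only [if_pos hx, if_pos hy]
        exact disA i (Finset.mem_filter.mpr ⟨hi, hx⟩) j (Finset.mem_filter.mpr ⟨hj, hy⟩) hij
      · simp only [if_pos hx, if_neg hy]
        have e1 : (pA i).x2 ≤ c := (subA i (Finset.mem_filter.mpr ⟨hi, hx⟩)).1.2.1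
        have e2 : c ≤ (pB j).x1 := (subB j (Finset.mem_filter.mpr ⟨hj, hy⟩)).1.1
        exact Rect.disjoint_of_sepX e1 e2
      · simp only [if_neg hx, if_pos hy]
        have e1 : (pA j).x2 ≤ c := (subA j (Finset.mem_filter.mpr ⟨hj, hy⟩)).1.2.1
        have e2 : c ≤ (pB i).x1 := (subB i (Finset.mem_filter.mpr ⟨hi, hx⟩)).1.1
        exact (Rect.disjoint_of_sepX e1 e2).symm
      · simp only [if_neg hx, if_neg hy]
        exact disB i (Finset.mem_filter.mpr ⟨hi, hx⟩) j (Finset.mem_filter.mpr ⟨hj, hy⟩) hij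
    · refine gs_vcut' c h1 h2 ?_
        (S.filter (fun i => (place i).x2 ≤ c)) (S.filter (fun i => ¬ (place i).x2 ≤ c))
        (Finset.filter_subset _ _) (Finset.filter_subset _ _) ?_ ?_ ?_ ?_
      · intro i hi
        by_cases hx : (place i).x2 ≤ c
        · simp only [if_pos hx]
          exact Or.inl (subA i (Finset.mem_filter.mpr ⟨hi, hx⟩)).1.2.1
        · simp only [if_neg hx]
          exact Or.inr (subB i (Finset.mem_filter.mpr ⟨hi, hx⟩)).1.1
      · intro i hi
        by_cases hx : (place i).x2 ≤ c
        · simp only [if_pos hx, Finset.mem_filter]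
          exact iff_of_true (subA i (Finset.mem_filter.mpr ⟨hi, hx⟩)).1.2.1 ⟨hi, hx⟩
        · simp only [if_neg hx, Finset.mem_filter]
          have hc : c < (pB i).x2 := (subB i (Finset.mem_filter.mpr ⟨hi, hx⟩)).2.1
          exact iff_of_false (not_le_of_gt hc) (by simp [hx])
      · intro i hi
        by_cases hx : (place i).x2 ≤ c
        · simp only [if_pos hx, Finset.mem_filter]
          exact iff_of_false (by simp [(subA i (Finset.mem_filter.mpr ⟨hi, hx⟩)).1.2.1])
            (by simp [hx])
        · simp only [if_neg hx, Finset.mem_filter]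
          have hc : c < (pB i).x2 := (subB i (Finset.mem_filter.mpr ⟨hi, hx⟩)).2.1
          exact iff_of_true (not_le_of_gt hc) ⟨hi, hx⟩
      · exact gs_congr gsA _ (fun i hi => if_pos (Finset.mem_filter.mp hi).2)
      · exact gs_congr gsB _ (fun i hi => if_neg (Finset.mem_filter.mp hi).2)
  | hcut P S c h1 h2 hcross hB hT ihB ihT =>
    intro hPx hPy hsub hdis
    have hsubL : ∀ i ∈ S.filter (fun i => (place i).y2 ≤ c),
        (place i).SubRect (⟨P.x1, P.x2, P.y1, c⟩ : Rect) := by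
      intro i hi
      obtain ⟨hi, hx⟩ := Finset.mem_filter.mp hi
      obtain ⟨s1, s2, s3, s4⟩ := hsub i hi
      exact ⟨s1, s2, s3, hx⟩
    have hsubR : ∀ i ∈ S.filter (fun i => ¬ (place i).y2 ≤ c),
        (place i).SubRect (⟨P.x1, P.x2, c, P.y2⟩ : Rect) := by
      intro i hi
      obtain ⟨hi, hx⟩ := Finset.mem_filter.mp hi
      obtain ⟨s1, s2, s3, s4⟩ := hsub i hi
      exact ⟨s1, s2, (hcross i hi).resolve_left hx, s4⟩
    obtain ⟨pA, dimA, subA, disA, gsA⟩ := ihB hPx h1 hsubL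
      (fun i hi j hj hij => hdis i (Finset.mem_filter.mp hi).1 j (Finset.mem_filter.mp hj).1 hij)
    obtain ⟨pB, dimB, subB, disB, gsB⟩ := ihT hPx h2 hsubR
      (fun i hi j hj hij => hdis i (Finset.mem_filter.mp hi).1 j (Finset.mem_filter.mp hj).1 hij)
    classical
    refine ⟨fun i => if (place i).y2 ≤ c then pA i else pB i, ?_, ?_, ?_, ?_⟩
    · intro i hi
      by_cases hx : (place i).y2 ≤ c
      · simp only [if_pos hx]; exact dimA i (Finset.mem_filter.mpr ⟨hi, hx⟩)
      · simp only [if_neg hx]; exact dimB i (Finset.mem_filter.mpr ⟨hi, hx⟩)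
    · intro i hi
      by_cases hx : (place i).y2 ≤ c
      · simp only [if_pos hx]
        obtain ⟨⟨s1, s2, s3, s4⟩, st1, st2⟩ := subA i (Finset.mem_filter.mpr ⟨hi, hx⟩)
        exact ⟨⟨s1, s2, s3, by linarith⟩, st1, st2⟩
      · simp only [if_neg hx]
        obtain ⟨⟨s1, s2, s3, s4⟩, st1, st2⟩ := subB i (Finset.mem_filter.mpr ⟨hi, hx⟩)
        exact ⟨⟨s1, s2, by linarith, s4⟩, st1, by linarith⟩
    · intro i hi j hj hij
      by_cases hx : (place i).y2 ≤ c <;> by_cases hy : (place j).y2 ≤ c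
      · simp only [if_pos hx, if_pos hy]
        exact disA i (Finset.mem_filter.mpr ⟨hi, hx⟩) j (Finset.mem_filter.mpr ⟨hj, hy⟩) hij
      · simp only [if_pos hx, if_neg hy]
        have e1 : (pA i).y2 ≤ c := (subA i (Finset.mem_filter.mpr ⟨hi, hx⟩)).1.2.2.2
        have e2 : c ≤ (pB j).y1 := (subB j (Finset.mem_filter.mpr ⟨hj, hy⟩)).1.2.2.1
        exact Rect.disjoint_of_sepY e1 e2
      · simp only [if_neg hx, if_pos hy]
        have e1 : (pA j).y2 ≤ c := (subA j (Finset.mem_filter.mpr ⟨hj, hy⟩)).1.2.2.2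
        have e2 : c ≤ (pB i).y1 := (subB i (Finset.mem_filter.mpr ⟨hi, hx⟩)).1.2.2.1
        exact (Rect.disjoint_of_sepY e1 e2).symm
      · simp only [if_neg hx, if_neg hy]
        exact disB i (Finset.mem_filter.mpr ⟨hi, hx⟩) j (Finset.mem_filter.mpr ⟨hj, hy⟩) hij
    · refine gs_hcut' c h1 h2 ?_
        (S.filter (fun i => (place i).y2 ≤ c)) (S.filter (fun i => ¬ (place i).y2 ≤ c))
        (Finset.filter_subset _ _) (Finset.filter_subset _ _) ?_ ?_ ?_ ?_
      · intro i hi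
        by_cases hx : (place i).y2 ≤ c
        · simp only [if_pos hx]
          exact Or.inl (subA i (Finset.mem_filter.mpr ⟨hi, hx⟩)).1.2.2.2
        · simp only [if_neg hx]
          exact Or.inr (subB i (Finset.mem_filter.mpr ⟨hi, hx⟩)).1.2.2.1
      · intro i hi
        by_cases hx : (place i).y2 ≤ c
        · simp only [if_pos hx, Finset.mem_filter]
          exact iff_of_true (subA i (Finset.mem_filter.mpr ⟨hi, hx⟩)).1.2.2.2 ⟨hi, hx⟩
        · simp only [if_neg hx, Finset.mem_filter]
          have hc : c < (pB i).y2 := (subB i (Finset.mem_filter.mpr ⟨hi, hx⟩)).2.2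
          exact iff_of_false (not_le_of_gt hc) (by simp [hx])
      · intro i hi
        by_cases hx : (place i).y2 ≤ c
        · simp only [if_pos hx, Finset.mem_filter]
          exact iff_of_false (by simp [(subA i (Finset.mem_filter.mpr ⟨hi, hx⟩)).1.2.2.2])
            (by simp [hx])
        · simp only [if_neg hx, Finset.mem_filter]
          have hc : c < (pB i).y2 := (subB i (Finset.mem_filter.mpr ⟨hi, hx⟩)).2.2
          exact iff_of_true (not_le_of_gt hc) ⟨hi, hx⟩
      · exact gs_congr gsA _ (fun i hi => if_pos (Finset.mem_filter.mp hi).2)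
      · exact gs_congr gsB _ (fun i hi => if_neg (Finset.mem_filter.mp hi).2)
/-- **Corner repacking lemma.** Any guillotine-separable packing of a piece
containing a designated item `m` can be repacked so that `m` sits in the
top-right corner of the piece and every other item lies in the boundary-L. -/
lemma lemB {ι : Type*} {place : ι → Rect} {P : Rect} {S : Finset ι}
    (h : GuillotineSep place P S) :
    ∀ m ∈ S,
    P.x1 < P.x2 → P.y1 < P.y2 →
    (∀ i ∈ S, (place i).SubRect P) →
    (∀ i ∈ S, ∀ j ∈ S, i ≠ j → Disjoint (place i).toSet (place j).toSet) →
    ∃ place' : ι → Rect,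
      (∀ i ∈ S, (place' i).width = (place i).width ∧ (place' i).height = (place i).height) ∧
      (∀ i ∈ S, (place' i).SubRect P ∧ P.x1 < (place' i).x2 ∧ P.y1 < (place' i).y2) ∧
      (∀ i ∈ S, ∀ j ∈ S, i ≠ j → Disjoint (place' i).toSet (place' j).toSet) ∧
      GuillotineSep place' P S ∧
      place' m = ⟨P.x2 - (place m).width, P.x2, P.y2 - (place m).height, P.y2⟩ ∧
      ∀ i ∈ S, i ≠ m →
        (place' i).SubRect ⟨P.x1, P.x2, P.y1, P.y2 - (place m).height⟩ ∨
        (place' i).SubRect ⟨P.x1, P.x2 - (place m).width, P.y1, P.y2⟩ := by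
  induction h with
  | base P S hS =>
    intro m hm hPx hPy hsub _hdis
    have heq : ∀ i ∈ S, i = m := fun i hi => Finset.card_le_one.mp hS i hi m hm
    obtain ⟨hm1, hm2, hm3, hm4⟩ := hsub m hm
    have hwm : (place m).width = (place m).x2 - (place m).x1 := rfl
    have hhm : (place m).height = (place m).y2 - (place m).y1 := rfl
    refine ⟨fun _ => ⟨P.x2 - (place m).width, P.x2, P.y2 - (place m).height, P.y2⟩,
      ?_, ?_, ?_, .base P S hS, rfl, ?_⟩
    · intro i hi
      rw [heq i hi]
      constructor <;> simp [Rect.width, Rect.height]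
    · intro i hi
      exact ⟨⟨by simp [Rect.width]; linarith, le_refl _, by simp [Rect.height]; linarith,
        le_refl _⟩, hPx, hPy⟩
    · intro i hi j hj hij
      exact absurd ((heq i hi).trans (heq j hj).symm) hij
    · intro i hi hne
      exact absurd (heq i hi) hne
  | vcut P S c h1 h2 hcross hL hR ihL ihR =>
    intro m hm hPx hPy hsub hdis
    have hsubL : ∀ i ∈ S.filter (fun i => (place i).x2 ≤ c),
        (place i).SubRect (⟨P.x1, c, P.y1, P.y2⟩ : Rect) := by
      intro i hi
      obtain ⟨hi, hx⟩ := Finset.mem_filter.mp hi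
      obtain ⟨s1, s2, s3, s4⟩ := hsub i hi
      exact ⟨s1, hx, s3, s4⟩
    have hsubR : ∀ i ∈ S.filter (fun i => ¬ (place i).x2 ≤ c),
        (place i).SubRect (⟨c, P.x2, P.y1, P.y2⟩ : Rect) := by
      intro i hi
      obtain ⟨hi, hx⟩ := Finset.mem_filter.mp hi
      obtain ⟨s1, s2, s3, s4⟩ := hsub i hi
      exact ⟨(hcross i hi).resolve_left hx, s2, s3, s4⟩
    have hdisL : ∀ i ∈ S.filter (fun i => (place i).x2 ≤ c),
        ∀ j ∈ S.filter (fun i => (place i).x2 ≤ c), i ≠ j →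
          Disjoint (place i).toSet (place j).toSet :=
      fun i hi j hj hij => hdis i (Finset.mem_filter.mp hi).1 j (Finset.mem_filter.mp hj).1 hij
    have hdisR : ∀ i ∈ S.filter (fun i => ¬ (place i).x2 ≤ c),
        ∀ j ∈ S.filter (fun i => ¬ (place i).x2 ≤ c), i ≠ j →
          Disjoint (place i).toSet (place j).toSet :=
      fun i hi j hj hij => hdis i (Finset.mem_filter.mp hi).1 j (Finset.mem_filter.mp hj).1 hij
    have hwm : (place m).width = (place m).x2 - (place m).x1 := rfl
    obtain ⟨hm1, hm2, hm3, hm4⟩ := hsub m hm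
    classical
    by_cases hmc : (place m).x2 ≤ c
    · -- `m` lies in the left part: recurse left, move the right strip to the far left.
      obtain ⟨pA, dimA, subA, disA, gsA, mA, LA⟩ :=
        ihL m (Finset.mem_filter.mpr ⟨hm, hmc⟩) h1 hPy hsubL hdisL
      obtain ⟨pB, dimB, subB, disB, gsB⟩ := lemA hR h2 hPy hsubR hdisR
      have SA : ∀ i ∈ S, (place i).x2 ≤ c →
          P.x1 ≤ (pA i).x1 ∧ (pA i).x2 ≤ c ∧ P.y1 ≤ (pA i).y1 ∧ (pA i).y2 ≤ P.y2
            ∧ P.x1 < (pA i).x2 ∧ P.y1 < (pA i).y2 := by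
        intro i hi hx
        obtain ⟨⟨s1, s2, s3, s4⟩, t1, t2⟩ := subA i (Finset.mem_filter.mpr ⟨hi, hx⟩)
        exact ⟨s1, s2, s3, s4, t1, t2⟩
      have SB : ∀ i ∈ S, ¬ (place i).x2 ≤ c →
          c ≤ (pB i).x1 ∧ (pB i).x2 ≤ P.x2 ∧ P.y1 ≤ (pB i).y1 ∧ (pB i).y2 ≤ P.y2
            ∧ c < (pB i).x2 ∧ P.y1 < (pB i).y2 := by
        intro i hi hx
        obtain ⟨⟨s1, s2, s3, s4⟩, t1, t2⟩ := subB i (Finset.mem_filter.mpr ⟨hi, hx⟩)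
        exact ⟨s1, s2, s3, s4, t1, t2⟩
      refine ⟨fun i => if (place i).x2 ≤ c then (pA i).translate (P.x2 - c) 0
          else (pB i).translate (P.x1 - c) 0, ?_, ?_, ?_, ?_, ?_, ?_⟩
      · intro i hi
        by_cases hx : (place i).x2 ≤ c
        · simp only [if_pos hx, Rect.translate_width, Rect.translate_height]
          exact dimA i (Finset.mem_filter.mpr ⟨hi, hx⟩)
        · simp only [if_neg hx, Rect.translate_width, Rect.translate_height]
          exact dimB i (Finset.mem_filter.mpr ⟨hi, hx⟩)
      · intro i hi
        by_cases hx : (place i).x2 ≤ c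
        · simp only [if_pos hx]
          obtain ⟨a1, a2, a3, a4, a5, a6⟩ := SA i hi hx
          refine ⟨Rect.translate_subRect (by linarith) (by linarith) (by linarith) (by linarith),
            ?_, ?_⟩
          · simp only [Rect.translate_x2]; linarith
          · simp only [Rect.translate_y2]; linarith
        · simp only [if_neg hx]
          obtain ⟨b1, b2, b3, b4, b5, b6⟩ := SB i hi hx
          refine ⟨Rect.translate_subRect (by linarith) (by linarith) (by linarith) (by linarith),
            ?_, ?_⟩
          · simp only [Rect.translate_x2]; linarith
          · simp only [Rect.translate_y2]; linarith
      · intro i hi j hj hij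
        by_cases hx : (place i).x2 ≤ c <;> by_cases hy : (place j).x2 ≤ c
        · simp only [if_pos hx, if_pos hy]
          exact Rect.disjoint_translate
            (disA i (Finset.mem_filter.mpr ⟨hi, hx⟩) j (Finset.mem_filter.mpr ⟨hj, hy⟩) hij) _ _
        · simp only [if_pos hx, if_neg hy]
          obtain ⟨a1, a2, a3, a4, a5, a6⟩ := SA i hi hx
          obtain ⟨b1, b2, b3, b4, b5, b6⟩ := SB j hj hy
          refine (Rect.disjoint_of_sepX (c := P.x1 + (P.x2 - c)) ?_ ?_).symm
          · simp only [Rect.translate_x2]; linarith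
          · simp only [Rect.translate_x1]; linarith
        · simp only [if_neg hx, if_pos hy]
          obtain ⟨a1, a2, a3, a4, a5, a6⟩ := SA j hj hy
          obtain ⟨b1, b2, b3, b4, b5, b6⟩ := SB i hi hx
          refine Rect.disjoint_of_sepX (c := P.x1 + (P.x2 - c)) ?_ ?_
          · simp only [Rect.translate_x2]; linarith
          · simp only [Rect.translate_x1]; linarith
        · simp only [if_neg hx, if_neg hy]
          exact Rect.disjoint_translate
            (disB i (Finset.mem_filter.mpr ⟨hi, hx⟩) j (Finset.mem_filter.mpr ⟨hj, hy⟩) hij) _ _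
      · refine gs_vcut' (P.x1 + (P.x2 - c)) (by linarith) (by linarith) ?_
          (S.filter (fun i => ¬ (place i).x2 ≤ c)) (S.filter (fun i => (place i).x2 ≤ c))
          (Finset.filter_subset _ _) (Finset.filter_subset _ _) ?_ ?_ ?_ ?_
        · intro i hi
          by_cases hx : (place i).x2 ≤ c
          · obtain ⟨a1, a2, a3, a4, a5, a6⟩ := SA i hi hx
            refine Or.inr ?_
            simp only [if_pos hx, Rect.translate_x1]; linarith
          · obtain ⟨b1, b2, b3, b4, b5, b6⟩ := SB i hi hx
            refine Or.inl ?_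
            simp only [if_neg hx, Rect.translate_x2]; linarith
        · intro i hi
          by_cases hx : (place i).x2 ≤ c
          · obtain ⟨a1, a2, a3, a4, a5, a6⟩ := SA i hi hx
            simp only [if_pos hx, Finset.mem_filter, Rect.translate_x2]
            exact iff_of_false (by push_neg; linarith) (by simp [hx])
          · obtain ⟨b1, b2, b3, b4, b5, b6⟩ := SB i hi hx
            simp only [if_neg hx, Finset.mem_filter, Rect.translate_x2]
            exact iff_of_true (by linarith) ⟨hi, hx⟩
        · intro i hi
          by_cases hx : (place i).x2 ≤ c
          · obtain ⟨a1, a2, a3, a4, a5, a6⟩ := SA i hi hx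
            simp only [if_pos hx, Finset.mem_filter, Rect.translate_x2]
            exact iff_of_true (by push_neg; linarith) ⟨hi, hx⟩
          · obtain ⟨b1, b2, b3, b4, b5, b6⟩ := SB i hi hx
            simp only [if_neg hx, Finset.mem_filter, Rect.translate_x2]
            exact iff_of_false (by push_neg; linarith) (by simp [hx])
        · have hgs := gs_translate_congr gsB (P.x1 - c) 0
            (fun i => (pB i).translate (P.x1 - c) 0) (fun i _ => rfl)
          have hpe : ((⟨c, P.x2, P.y1, P.y2⟩ : Rect).translate (P.x1 - c) 0)
              = (⟨P.x1, P.x1 + (P.x2 - c), P.y1, P.y2⟩ : Rect) := by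
            simp only [Rect.translate]; congr 1 <;> ring
          rw [hpe] at hgs
          exact gs_congr hgs _ (fun i hi => if_neg (Finset.mem_filter.mp hi).2)
        · have hgs := gs_translate_congr gsA (P.x2 - c) 0
            (fun i => (pA i).translate (P.x2 - c) 0) (fun i _ => rfl)
          have hpe : ((⟨P.x1, c, P.y1, P.y2⟩ : Rect).translate (P.x2 - c) 0)
              = (⟨P.x1 + (P.x2 - c), P.x2, P.y1, P.y2⟩ : Rect) := by
            simp only [Rect.translate]; congr 1 <;> ring
          rw [hpe] at hgs
          exact gs_congr hgs _ (fun i hi => if_pos (Finset.mem_filter.mp hi).2)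
      · simp only [if_pos hmc, mA]
        simp only [Rect.translate]; congr 1 <;> ring
      · intro i hi hne
        by_cases hx : (place i).x2 ≤ c
        · rcases LA i (Finset.mem_filter.mpr ⟨hi, hx⟩) hne with hcase | hcase
          · left
            have t1 : P.x1 ≤ (pA i).x1 := hcase.1
            have t2 : (pA i).x2 ≤ c := hcase.2.1
            have t3 : P.y1 ≤ (pA i).y1 := hcase.2.2.1
            have t4 : (pA i).y2 ≤ P.y2 - (place m).height := hcase.2.2.2
            simp only [if_pos hx]
            refine Rect.translate_subRect ?_ ?_ ?_ ?_ <;> simp only [] <;> linarith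
          · right
            have t1 : P.x1 ≤ (pA i).x1 := hcase.1
            have t2 : (pA i).x2 ≤ c - (place m).width := hcase.2.1
            have t3 : P.y1 ≤ (pA i).y1 := hcase.2.2.1
            have t4 : (pA i).y2 ≤ P.y2 := hcase.2.2.2
            simp only [if_pos hx]
            refine Rect.translate_subRect ?_ ?_ ?_ ?_ <;> simp only [] <;> linarith
        · right
          obtain ⟨b1, b2, b3, b4, b5, b6⟩ := SB i hi hx
          simp only [if_neg hx]
          refine Rect.translate_subRect ?_ ?_ ?_ ?_ <;> simp only [] <;> linarith
    · -- `m` lies in the right part: the left strip stays in place.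
      obtain ⟨pA, dimA, subA, disA, gsA⟩ := lemA hL h1 hPy hsubL hdisL
      obtain ⟨pB, dimB, subB, disB, gsB, mB, LB⟩ :=
        ihR m (Finset.mem_filter.mpr ⟨hm, hmc⟩) h2 hPy hsubR hdisR
      have SA : ∀ i ∈ S, (place i).x2 ≤ c →
          P.x1 ≤ (pA i).x1 ∧ (pA i).x2 ≤ c ∧ P.y1 ≤ (pA i).y1 ∧ (pA i).y2 ≤ P.y2
            ∧ P.x1 < (pA i).x2 ∧ P.y1 < (pA i).y2 := by
        intro i hi hx
        obtain ⟨⟨s1, s2, s3, s4⟩, t1, t2⟩ := subA i (Finset.mem_filter.mpr ⟨hi, hx⟩)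
        exact ⟨s1, s2, s3, s4, t1, t2⟩
      have SB : ∀ i ∈ S, ¬ (place i).x2 ≤ c →
          c ≤ (pB i).x1 ∧ (pB i).x2 ≤ P.x2 ∧ P.y1 ≤ (pB i).y1 ∧ (pB i).y2 ≤ P.y2
            ∧ c < (pB i).x2 ∧ P.y1 < (pB i).y2 := by
        intro i hi hx
        obtain ⟨⟨s1, s2, s3, s4⟩, t1, t2⟩ := subB i (Finset.mem_filter.mpr ⟨hi, hx⟩)
        exact ⟨s1, s2, s3, s4, t1, t2⟩
      have hmx1 : c ≤ (place m).x1 := (hcross m hm).resolve_left hmc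
      refine ⟨fun i => if (place i).x2 ≤ c then pA i else pB i, ?_, ?_, ?_, ?_, ?_, ?_⟩
      · intro i hi
        by_cases hx : (place i).x2 ≤ c
        · simp only [if_pos hx]; exact dimA i (Finset.mem_filter.mpr ⟨hi, hx⟩)
        · simp only [if_neg hx]; exact dimB i (Finset.mem_filter.mpr ⟨hi, hx⟩)
      · intro i hi
        by_cases hx : (place i).x2 ≤ c
        · simp only [if_pos hx]
          obtain ⟨a1, a2, a3, a4, a5, a6⟩ := SA i hi hx
          exact ⟨⟨a1, by linarith, a3, a4⟩, a5, a6⟩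
        · simp only [if_neg hx]
          obtain ⟨b1, b2, b3, b4, b5, b6⟩ := SB i hi hx
          exact ⟨⟨by linarith, b2, b3, b4⟩, by linarith, b6⟩
      · intro i hi j hj hij
        by_cases hx : (place i).x2 ≤ c <;> by_cases hy : (place j).x2 ≤ c
        · simp only [if_pos hx, if_pos hy]
          exact disA i (Finset.mem_filter.mpr ⟨hi, hx⟩) j (Finset.mem_filter.mpr ⟨hj, hy⟩) hij
        · simp only [if_pos hx, if_neg hy]
          obtain ⟨a1, a2, a3, a4, a5, a6⟩ := SA i hi hx
          obtain ⟨b1, b2, b3, b4, b5, b6⟩ := SB j hj hy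
          exact Rect.disjoint_of_sepX a2 b1
        · simp only [if_neg hx, if_pos hy]
          obtain ⟨a1, a2, a3, a4, a5, a6⟩ := SA j hj hy
          obtain ⟨b1, b2, b3, b4, b5, b6⟩ := SB i hi hx
          exact (Rect.disjoint_of_sepX a2 b1).symm
        · simp only [if_neg hx, if_neg hy]
          exact disB i (Finset.mem_filter.mpr ⟨hi, hx⟩) j (Finset.mem_filter.mpr ⟨hj, hy⟩) hij
      · refine gs_vcut' c h1 h2 ?_
          (S.filter (fun i => (place i).x2 ≤ c)) (S.filter (fun i => ¬ (place i).x2 ≤ c))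
          (Finset.filter_subset _ _) (Finset.filter_subset _ _) ?_ ?_ ?_ ?_
        · intro i hi
          by_cases hx : (place i).x2 ≤ c
          · obtain ⟨a1, a2, a3, a4, a5, a6⟩ := SA i hi hx
            refine Or.inl ?_
            simp only [if_pos hx]; exact a2
          · obtain ⟨b1, b2, b3, b4, b5, b6⟩ := SB i hi hx
            refine Or.inr ?_
            simp only [if_neg hx]; exact b1
        · intro i hi
          by_cases hx : (place i).x2 ≤ c
          · obtain ⟨a1, a2, a3, a4, a5, a6⟩ := SA i hi hx
            simp only [if_pos hx, Finset.mem_filter]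
            exact iff_of_true a2 ⟨hi, hx⟩
          · obtain ⟨b1, b2, b3, b4, b5, b6⟩ := SB i hi hx
            simp only [if_neg hx, Finset.mem_filter]
            exact iff_of_false (by push_neg; linarith) (by simp [hx])
        · intro i hi
          by_cases hx : (place i).x2 ≤ c
          · obtain ⟨a1, a2, a3, a4, a5, a6⟩ := SA i hi hx
            simp only [if_pos hx, Finset.mem_filter]
            exact iff_of_false (by simp [a2]) (by simp [hx])
          · obtain ⟨b1, b2, b3, b4, b5, b6⟩ := SB i hi hx
            simp only [if_neg hx, Finset.mem_filter]
            exact iff_of_true (by push_neg; linarith) ⟨hi, hx⟩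
        · exact gs_congr gsA _ (fun i hi => if_pos (Finset.mem_filter.mp hi).2)
        · exact gs_congr gsB _ (fun i hi => if_neg (Finset.mem_filter.mp hi).2)
      · simp only [if_neg hmc]
        exact mB
      · intro i hi hne
        by_cases hx : (place i).x2 ≤ c
        · right
          obtain ⟨a1, a2, a3, a4, a5, a6⟩ := SA i hi hx
          simp only [if_pos hx]
          exact ⟨a1, by simp only []; linarith, a3, a4⟩
        · rcases LB i (Finset.mem_filter.mpr ⟨hi, hx⟩) hne with hcase | hcase
          · left
            have t1 : c ≤ (pB i).x1 := hcase.1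
            have t2 : (pB i).x2 ≤ P.x2 := hcase.2.1
            have t3 : P.y1 ≤ (pB i).y1 := hcase.2.2.1
            have t4 : (pB i).y2 ≤ P.y2 - (place m).height := hcase.2.2.2
            simp only [if_neg hx]
            exact ⟨by linarith, t2, t3, t4⟩
          · right
            have t1 : c ≤ (pB i).x1 := hcase.1
            have t2 : (pB i).x2 ≤ P.x2 - (place m).width := hcase.2.1
            have t3 : P.y1 ≤ (pB i).y1 := hcase.2.2.1
            have t4 : (pB i).y2 ≤ P.y2 := hcase.2.2.2
            simp only [if_neg hx]
            exact ⟨by linarith, t2, t3, t4⟩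
  | hcut P S c h1 h2 hcross hB hT ihB ihT =>
    intro m hm hPx hPy hsub hdis
    have hsubL : ∀ i ∈ S.filter (fun i => (place i).y2 ≤ c),
        (place i).SubRect (⟨P.x1, P.x2, P.y1, c⟩ : Rect) := by
      intro i hi
      obtain ⟨hi, hx⟩ := Finset.mem_filter.mp hi
      obtain ⟨s1, s2, s3, s4⟩ := hsub i hi
      exact ⟨s1, s2, s3, hx⟩
    have hsubR : ∀ i ∈ S.filter (fun i => ¬ (place i).y2 ≤ c),
        (place i).SubRect (⟨P.x1, P.x2, c, P.y2⟩ : Rect) := by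
      intro i hi
      obtain ⟨hi, hx⟩ := Finset.mem_filter.mp hi
      obtain ⟨s1, s2, s3, s4⟩ := hsub i hi
      exact ⟨s1, s2, (hcross i hi).resolve_left hx, s4⟩
    have hdisL : ∀ i ∈ S.filter (fun i => (place i).y2 ≤ c),
        ∀ j ∈ S.filter (fun i => (place i).y2 ≤ c), i ≠ j →
          Disjoint (place i).toSet (place j).toSet :=
      fun i hi j hj hij => hdis i (Finset.mem_filter.mp hi).1 j (Finset.mem_filter.mp hj).1 hij
    have hdisR : ∀ i ∈ S.filter (fun i => ¬ (place i).y2 ≤ c),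
        ∀ j ∈ S.filter (fun i => ¬ (place i).y2 ≤ c), i ≠ j →
          Disjoint (place i).toSet (place j).toSet :=
      fun i hi j hj hij => hdis i (Finset.mem_filter.mp hi).1 j (Finset.mem_filter.mp hj).1 hij
    have hhm : (place m).height = (place m).y2 - (place m).y1 := rfl
    obtain ⟨hm1, hm2, hm3, hm4⟩ := hsub m hm
    classical
    by_cases hmc : (place m).y2 ≤ c
    · -- `m` lies in the bottom part: recurse below, move the top strip to the very bottom.
      obtain ⟨pA, dimA, subA, disA, gsA, mA, LA⟩ :=
        ihB m (Finset.mem_filter.mpr ⟨hm, hmc⟩) hPx h1 hsubL hdisL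
      obtain ⟨pB, dimB, subB, disB, gsB⟩ := lemA hT hPx h2 hsubR hdisR
      have SA : ∀ i ∈ S, (place i).y2 ≤ c →
          P.x1 ≤ (pA i).x1 ∧ (pA i).x2 ≤ P.x2 ∧ P.y1 ≤ (pA i).y1 ∧ (pA i).y2 ≤ c
            ∧ P.x1 < (pA i).x2 ∧ P.y1 < (pA i).y2 := by
        intro i hi hx
        obtain ⟨⟨s1, s2, s3, s4⟩, t1, t2⟩ := subA i (Finset.mem_filter.mpr ⟨hi, hx⟩)
        exact ⟨s1, s2, s3, s4, t1, t2⟩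
      have SB : ∀ i ∈ S, ¬ (place i).y2 ≤ c →
          P.x1 ≤ (pB i).x1 ∧ (pB i).x2 ≤ P.x2 ∧ c ≤ (pB i).y1 ∧ (pB i).y2 ≤ P.y2
            ∧ P.x1 < (pB i).x2 ∧ c < (pB i).y2 := by
        intro i hi hx
        obtain ⟨⟨s1, s2, s3, s4⟩, t1, t2⟩ := subB i (Finset.mem_filter.mpr ⟨hi, hx⟩)
        exact ⟨s1, s2, s3, s4, t1, t2⟩
      refine ⟨fun i => if (place i).y2 ≤ c then (pA i).translate 0 (P.y2 - c)
          else (pB i).translate 0 (P.y1 - c), ?_, ?_, ?_, ?_, ?_, ?_⟩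
      · intro i hi
        by_cases hx : (place i).y2 ≤ c
        · simp only [if_pos hx, Rect.translate_width, Rect.translate_height]
          exact dimA i (Finset.mem_filter.mpr ⟨hi, hx⟩)
        · simp only [if_neg hx, Rect.translate_width, Rect.translate_height]
          exact dimB i (Finset.mem_filter.mpr ⟨hi, hx⟩)
      · intro i hi
        by_cases hx : (place i).y2 ≤ c
        · simp only [if_pos hx]
          obtain ⟨a1, a2, a3, a4, a5, a6⟩ := SA i hi hx
          refine ⟨Rect.translate_subRect (by linarith) (by linarith) (by linarith) (by linarith),
            ?_, ?_⟩
          · simp only [Rect.translate_x2]; linarith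
          · simp only [Rect.translate_y2]; linarith
        · simp only [if_neg hx]
          obtain ⟨b1, b2, b3, b4, b5, b6⟩ := SB i hi hx
          refine ⟨Rect.translate_subRect (by linarith) (by linarith) (by linarith) (by linarith),
            ?_, ?_⟩
          · simp only [Rect.translate_x2]; linarith
          · simp only [Rect.translate_y2]; linarith
      · intro i hi j hj hij
        by_cases hx : (place i).y2 ≤ c <;> by_cases hy : (place j).y2 ≤ c
        · simp only [if_pos hx, if_pos hy]
          exact Rect.disjoint_translate
            (disA i (Finset.mem_filter.mpr ⟨hi, hx⟩) j (Finset.mem_filter.mpr ⟨hj, hy⟩) hij) _ _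
        · simp only [if_pos hx, if_neg hy]
          obtain ⟨a1, a2, a3, a4, a5, a6⟩ := SA i hi hx
          obtain ⟨b1, b2, b3, b4, b5, b6⟩ := SB j hj hy
          refine (Rect.disjoint_of_sepY (c := P.y1 + (P.y2 - c)) ?_ ?_).symm
          · simp only [Rect.translate_y2]; linarith
          · simp only [Rect.translate_y1]; linarith
        · simp only [if_neg hx, if_pos hy]
          obtain ⟨a1, a2, a3, a4, a5, a6⟩ := SA j hj hy
          obtain ⟨b1, b2, b3, b4, b5, b6⟩ := SB i hi hx
          refine Rect.disjoint_of_sepY (c := P.y1 + (P.y2 - c)) ?_ ?_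
          · simp only [Rect.translate_y2]; linarith
          · simp only [Rect.translate_y1]; linarith
        · simp only [if_neg hx, if_neg hy]
          exact Rect.disjoint_translate
            (disB i (Finset.mem_filter.mpr ⟨hi, hx⟩) j (Finset.mem_filter.mpr ⟨hj, hy⟩) hij) _ _
      · refine gs_hcut' (P.y1 + (P.y2 - c)) (by linarith) (by linarith) ?_
          (S.filter (fun i => ¬ (place i).y2 ≤ c)) (S.filter (fun i => (place i).y2 ≤ c))
          (Finset.filter_subset _ _) (Finset.filter_subset _ _) ?_ ?_ ?_ ?_
        · intro i hi
          by_cases hx : (place i).y2 ≤ c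
          · obtain ⟨a1, a2, a3, a4, a5, a6⟩ := SA i hi hx
            refine Or.inr ?_
            simp only [if_pos hx, Rect.translate_y1]; linarith
          · obtain ⟨b1, b2, b3, b4, b5, b6⟩ := SB i hi hx
            refine Or.inl ?_
            simp only [if_neg hx, Rect.translate_y2]; linarith
        · intro i hi
          by_cases hx : (place i).y2 ≤ c
          · obtain ⟨a1, a2, a3, a4, a5, a6⟩ := SA i hi hx
            simp only [if_pos hx, Finset.mem_filter, Rect.translate_y2]
            exact iff_of_false (by push_neg; linarith) (by simp [hx])
          · obtain ⟨b1, b2, b3, b4, b5, b6⟩ := SB i hi hx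
            simp only [if_neg hx, Finset.mem_filter, Rect.translate_y2]
            exact iff_of_true (by linarith) ⟨hi, hx⟩
        · intro i hi
          by_cases hx : (place i).y2 ≤ c
          · obtain ⟨a1, a2, a3, a4, a5, a6⟩ := SA i hi hx
            simp only [if_pos hx, Finset.mem_filter, Rect.translate_y2]
            exact iff_of_true (by push_neg; linarith) ⟨hi, hx⟩
          · obtain ⟨b1, b2, b3, b4, b5, b6⟩ := SB i hi hx
            simp only [if_neg hx, Finset.mem_filter, Rect.translate_y2]
            exact iff_of_false (by push_neg; linarith) (by simp [hx])
        · have hgs := gs_translate_congr gsB 0 (P.y1 - c)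
            (fun i => (pB i).translate 0 (P.y1 - c)) (fun i _ => rfl)
          have hpe : ((⟨P.x1, P.x2, c, P.y2⟩ : Rect).translate 0 (P.y1 - c))
              = (⟨P.x1, P.x2, P.y1, P.y1 + (P.y2 - c)⟩ : Rect) := by
            simp only [Rect.translate]; congr 1 <;> ring
          rw [hpe] at hgs
          exact gs_congr hgs _ (fun i hi => if_neg (Finset.mem_filter.mp hi).2)
        · have hgs := gs_translate_congr gsA 0 (P.y2 - c)
            (fun i => (pA i).translate 0 (P.y2 - c)) (fun i _ => rfl)
          have hpe : ((⟨P.x1, P.x2, P.y1, c⟩ : Rect).translate 0 (P.y2 - c))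
              = (⟨P.x1, P.x2, P.y1 + (P.y2 - c), P.y2⟩ : Rect) := by
            simp only [Rect.translate]; congr 1 <;> ring
          rw [hpe] at hgs
          exact gs_congr hgs _ (fun i hi => if_pos (Finset.mem_filter.mp hi).2)
      · simp only [if_pos hmc, mA]
        simp only [Rect.translate]; congr 1 <;> ring
      · intro i hi hne
        by_cases hx : (place i).y2 ≤ c
        · rcases LA i (Finset.mem_filter.mpr ⟨hi, hx⟩) hne with hcase | hcase
          · left
            have t1 : P.x1 ≤ (pA i).x1 := hcase.1
            have t2 : (pA i).x2 ≤ P.x2 := hcase.2.1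
            have t3 : P.y1 ≤ (pA i).y1 := hcase.2.2.1
            have t4 : (pA i).y2 ≤ c - (place m).height := hcase.2.2.2
            simp only [if_pos hx]
            refine Rect.translate_subRect ?_ ?_ ?_ ?_ <;> simp only [] <;> linarith
          · right
            have t1 : P.x1 ≤ (pA i).x1 := hcase.1
            have t2 : (pA i).x2 ≤ P.x2 - (place m).width := hcase.2.1
            have t3 : P.y1 ≤ (pA i).y1 := hcase.2.2.1
            have t4 : (pA i).y2 ≤ c := hcase.2.2.2
            simp only [if_pos hx]
            refine Rect.translate_subRect ?_ ?_ ?_ ?_ <;> simp only [] <;> linarith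
        · left
          obtain ⟨b1, b2, b3, b4, b5, b6⟩ := SB i hi hx
          simp only [if_neg hx]
          refine Rect.translate_subRect ?_ ?_ ?_ ?_ <;> simp only [] <;> linarith
    · -- `m` lies in the top part: the bottom strip stays in place.
      obtain ⟨pA, dimA, subA, disA, gsA⟩ := lemA hB hPx h1 hsubL hdisL
      obtain ⟨pB, dimB, subB, disB, gsB, mB, LB⟩ :=
        ihT m (Finset.mem_filter.mpr ⟨hm, hmc⟩) hPx h2 hsubR hdisR
      have SA : ∀ i ∈ S, (place i).y2 ≤ c →
          P.x1 ≤ (pA i).x1 ∧ (pA i).x2 ≤ P.x2 ∧ P.y1 ≤ (pA i).y1 ∧ (pA i).y2 ≤ c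
            ∧ P.x1 < (pA i).x2 ∧ P.y1 < (pA i).y2 := by
        intro i hi hx
        obtain ⟨⟨s1, s2, s3, s4⟩, t1, t2⟩ := subA i (Finset.mem_filter.mpr ⟨hi, hx⟩)
        exact ⟨s1, s2, s3, s4, t1, t2⟩
      have SB : ∀ i ∈ S, ¬ (place i).y2 ≤ c →
          P.x1 ≤ (pB i).x1 ∧ (pB i).x2 ≤ P.x2 ∧ c ≤ (pB i).y1 ∧ (pB i).y2 ≤ P.y2
            ∧ P.x1 < (pB i).x2 ∧ c < (pB i).y2 := by
        intro i hi hx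
        obtain ⟨⟨s1, s2, s3, s4⟩, t1, t2⟩ := subB i (Finset.mem_filter.mpr ⟨hi, hx⟩)
        exact ⟨s1, s2, s3, s4, t1, t2⟩
      have hmy1 : c ≤ (place m).y1 := (hcross m hm).resolve_left hmc
      refine ⟨fun i => if (place i).y2 ≤ c then pA i else pB i, ?_, ?_, ?_, ?_, ?_, ?_⟩
      · intro i hi
        by_cases hx : (place i).y2 ≤ c
        · simp only [if_pos hx]; exact dimA i (Finset.mem_filter.mpr ⟨hi, hx⟩)
        · simp only [if_neg hx]; exact dimB i (Finset.mem_filter.mpr ⟨hi, hx⟩)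
      · intro i hi
        by_cases hx : (place i).y2 ≤ c
        · simp only [if_pos hx]
          obtain ⟨a1, a2, a3, a4, a5, a6⟩ := SA i hi hx
          exact ⟨⟨a1, a2, a3, by linarith⟩, a5, a6⟩
        · simp only [if_neg hx]
          obtain ⟨b1, b2, b3, b4, b5, b6⟩ := SB i hi hx
          exact ⟨⟨b1, b2, by linarith, b4⟩, b5, by linarith⟩
      · intro i hi j hj hij
        by_cases hx : (place i).y2 ≤ c <;> by_cases hy : (place j).y2 ≤ c
        · simp only [if_pos hx, if_pos hy]
          exact disA i (Finset.mem_filter.mpr ⟨hi, hx⟩) j (Finset.mem_filter.mpr ⟨hj, hy⟩) hij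
        · simp only [if_pos hx, if_neg hy]
          obtain ⟨a1, a2, a3, a4, a5, a6⟩ := SA i hi hx
          obtain ⟨b1, b2, b3, b4, b5, b6⟩ := SB j hj hy
          exact Rect.disjoint_of_sepY a4 b3
        · simp only [if_neg hx, if_pos hy]
          obtain ⟨a1, a2, a3, a4, a5, a6⟩ := SA j hj hy
          obtain ⟨b1, b2, b3, b4, b5, b6⟩ := SB i hi hx
          exact (Rect.disjoint_of_sepY a4 b3).symm
        · simp only [if_neg hx, if_neg hy]
          exact disB i (Finset.mem_filter.mpr ⟨hi, hx⟩) j (Finset.mem_filter.mpr ⟨hj, hy⟩) hij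
      · refine gs_hcut' c h1 h2 ?_
          (S.filter (fun i => (place i).y2 ≤ c)) (S.filter (fun i => ¬ (place i).y2 ≤ c))
          (Finset.filter_subset _ _) (Finset.filter_subset _ _) ?_ ?_ ?_ ?_
        · intro i hi
          by_cases hx : (place i).y2 ≤ c
          · obtain ⟨a1, a2, a3, a4, a5, a6⟩ := SA i hi hx
            refine Or.inl ?_
            simp only [if_pos hx]; exact a4
          · obtain ⟨b1, b2, b3, b4, b5, b6⟩ := SB i hi hx
            refine Or.inr ?_
            simp only [if_neg hx]; exact b3
        · intro i hi
          by_cases hx : (place i).y2 ≤ c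
          · obtain ⟨a1, a2, a3, a4, a5, a6⟩ := SA i hi hx
            simp only [if_pos hx, Finset.mem_filter]
            exact iff_of_true a4 ⟨hi, hx⟩
          · obtain ⟨b1, b2, b3, b4, b5, b6⟩ := SB i hi hx
            simp only [if_neg hx, Finset.mem_filter]
            exact iff_of_false (by push_neg; linarith) (by simp [hx])
        · intro i hi
          by_cases hx : (place i).y2 ≤ c
          · obtain ⟨a1, a2, a3, a4, a5, a6⟩ := SA i hi hx
            simp only [if_pos hx, Finset.mem_filter]
            exact iff_of_false (by simp [a4]) (by simp [hx])
          · obtain ⟨b1, b2, b3, b4, b5, b6⟩ := SB i hi hx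
            simp only [if_neg hx, Finset.mem_filter]
            exact iff_of_true (by push_neg; linarith) ⟨hi, hx⟩
        · exact gs_congr gsA _ (fun i hi => if_pos (Finset.mem_filter.mp hi).2)
        · exact gs_congr gsB _ (fun i hi => if_neg (Finset.mem_filter.mp hi).2)
      · simp only [if_neg hmc]
        exact mB
      · intro i hi hne
        by_cases hx : (place i).y2 ≤ c
        · left
          obtain ⟨a1, a2, a3, a4, a5, a6⟩ := SA i hi hx
          simp only [if_pos hx]
          exact ⟨a1, a2, a3, by simp only []; linarith⟩
        · rcases LB i (Finset.mem_filter.mpr ⟨hi, hx⟩) hne with hcase | hcase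
          · left
            have t1 : P.x1 ≤ (pB i).x1 := hcase.1
            have t2 : (pB i).x2 ≤ P.x2 := hcase.2.1
            have t3 : c ≤ (pB i).y1 := hcase.2.2.1
            have t4 : (pB i).y2 ≤ P.y2 - (place m).height := hcase.2.2.2
            simp only [if_neg hx]
            exact ⟨t1, t2, by linarith, t4⟩
          · right
            have t1 : P.x1 ≤ (pB i).x1 := hcase.1
            have t2 : (pB i).x2 ≤ P.x2 - (place m).width := hcase.2.1
            have t3 : c ≤ (pB i).y1 := hcase.2.2.1
            have t4 : (pB i).y2 ≤ P.y2 := hcase.2.2.2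
            simp only [if_neg hx]
            exact ⟨t1, t2, by linarith, t4⟩
/-- If a finite set of items admits a guillotine-separable packing
into the `N × N` knapsack and contains a massive item `m`, then there is a
guillotine-separable repacking of all items in which `m` occupies the top-right
corner and all remaining items lie inside the complementary boundary-`L`. -/
theorem massive_item_corner_repacking
    {ι : Type*} (N ε : ℝ) (hN : 0 < N) (hε : 0 < ε) (hε' : ε < 1 / 10)
    (wd ht : ι → ℝ) (OPT : Finset ι) (place : ι → Rect)
    (hpack : GuillotinePacking wd ht OPT place (knapsack N))
    (m : ι) (hm : m ∈ OPT)
    (hmw : (1 - ε) * N ≤ wd m) (hmh : (1 - ε) * N ≤ ht m) :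
    ∃ place' : ι → Rect,
      GuillotinePacking wd ht OPT place' (knapsack N) ∧
      place' m = ⟨N - wd m, N, N - ht m, N⟩ ∧
      ∀ i ∈ OPT, i ≠ m →
        (place' i).SubRect ⟨0, N, 0, N - ht m⟩ ∨
        (place' i).SubRect ⟨0, N - wd m, 0, N⟩ := by
  obtain ⟨hpk, hgs⟩ := hpack
  have hkx : (knapsack N).x1 < (knapsack N).x2 := by simpa [knapsack] using hN
  have hky : (knapsack N).y1 < (knapsack N).y2 := by simpa [knapsack] using hN
  obtain ⟨place', hdims, hsub', hdis', hgs', hm', hLreg⟩ :=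
    lemB hgs m hm hkx hky hpk.hin hpk.hdisj
  have hwm : (place m).width = wd m := hpk.hw m hm
  have hhm : (place m).height = ht m := hpk.hh m hm
  refine ⟨place', ⟨⟨?_, ?_, ?_, hdis'⟩, hgs'⟩, ?_, ?_⟩
  · intro i hi
    rw [(hdims i hi).1]
    exact hpk.hw i hi
  · intro i hi
    rw [(hdims i hi).2]
    exact hpk.hh i hi
  · intro i hi
    exact (hsub' i hi).1
  · rw [hm']
    simp only [hwm, hhm, knapsack]
  · intro i hi hne
    rcases hLreg i hi hne with hcase | hcase
    · exact Or.inl (by simpa [knapsack, hhm] using hcase)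
    · exact Or.inr (by simpa [knapsack, hwm] using hcase)
end

section
/- (Resource contraction for guillotine packings) Let 0 < ε ≤ 1/10 and let M be a finite set of items that contains no massive item and admits a guillotine-separable packing into an N×N bin. If 90-degree rotations are allowed, then there exists M' ⊆ M with p(M') ≥ p(M)/2 that admits a guillotine-separable packing into an N × (1−ε/2)N bin (or a (1−ε/2)N × N bin). -/
/-- A placement of the items of `S` with 90 degree rotations allowed: each item is
placed with its prescribed dimensions or with width and height exchanged. -/
structure IsPackingRot {ι : Type*} (wd ht : ι → ℝ) (S : Finset ι)
    (place : ι → Rect) (P : Rect) : Prop where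
  hdims : ∀ i ∈ S, ((place i).width = wd i ∧ (place i).height = ht i) ∨
      ((place i).width = ht i ∧ (place i).height = wd i)
  hin : ∀ i ∈ S, (place i).SubRect P
  hdisj : ∀ i ∈ S, ∀ j ∈ S, i ≠ j → Disjoint (place i).toSet (place j).toSet

namespace RC

variable {ι : Type*}

def tr (dx dy : ℝ) (r : Rect) : Rect := ⟨r.x1 + dx, r.x2 + dx, r.y1 + dy, r.y2 + dy⟩

def fl (r : Rect) : Rect := ⟨r.y1, r.y2, r.x1, r.x2⟩

@[simp] lemma tr_x1 (dx dy : ℝ) (r : Rect) : (tr dx dy r).x1 = r.x1 + dx := rfl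
@[simp] lemma tr_x2 (dx dy : ℝ) (r : Rect) : (tr dx dy r).x2 = r.x2 + dx := rfl
@[simp] lemma tr_y1 (dx dy : ℝ) (r : Rect) : (tr dx dy r).y1 = r.y1 + dy := rfl
@[simp] lemma tr_y2 (dx dy : ℝ) (r : Rect) : (tr dx dy r).y2 = r.y2 + dy := rfl
@[simp] lemma fl_x1 (r : Rect) : (fl r).x1 = r.y1 := rfl
@[simp] lemma fl_x2 (r : Rect) : (fl r).x2 = r.y2 := rfl
@[simp] lemma fl_y1 (r : Rect) : (fl r).y1 = r.x1 := rfl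
@[simp] lemma fl_y2 (r : Rect) : (fl r).y2 = r.x2 := rfl

@[simp] lemma tr_width (dx dy : ℝ) (r : Rect) : (tr dx dy r).width = r.width := by
  simp [Rect.width, tr]
@[simp] lemma tr_height (dx dy : ℝ) (r : Rect) : (tr dx dy r).height = r.height := by
  simp [Rect.height, tr]
@[simp] lemma fl_width (r : Rect) : (fl r).width = r.height := rfl
@[simp] lemma fl_height (r : Rect) : (fl r).height = r.width := rfl

lemma mem_tr {dx dy : ℝ} {r : Rect} {p : ℝ × ℝ} :
    p ∈ (tr dx dy r).toSet ↔ (p.1 - dx, p.2 - dy) ∈ r.toSet := by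
  simp only [Rect.toSet, tr, Set.mem_setOf_eq]
  constructor <;> rintro ⟨a, b, c, d⟩ <;>
    exact ⟨by linarith, by linarith, by linarith, by linarith⟩

lemma mem_fl {r : Rect} {p : ℝ × ℝ} : p ∈ (fl r).toSet ↔ (p.2, p.1) ∈ r.toSet := by
  simp only [Rect.toSet, fl, Set.mem_setOf_eq]
  tauto

lemma disj_tr {dx dy : ℝ} {r s : Rect} (h : Disjoint r.toSet s.toSet) :
    Disjoint (tr dx dy r).toSet (tr dx dy s).toSet := by
  rw [Set.disjoint_left] at h ⊢
  intro p hp hq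
  exact h (mem_tr.1 hp) (mem_tr.1 hq)

lemma disj_fl {r s : Rect} (h : Disjoint r.toSet s.toSet) :
    Disjoint (fl r).toSet (fl s).toSet := by
  rw [Set.disjoint_left] at h ⊢
  intro p hp hq
  exact h (mem_fl.1 hp) (mem_fl.1 hq)

lemma toSet_empty {r : Rect} (h : r.y2 ≤ r.y1) : r.toSet = ∅ := by
  ext p
  simp only [Rect.toSet, Set.mem_setOf_eq, Set.mem_empty_iff_false, iff_false]
  rintro ⟨_, _, _, _⟩
  linarith

lemma disj_of_below {r s : Rect} (h : r.y2 ≤ s.y1) : Disjoint r.toSet s.toSet := by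
  rw [Set.disjoint_left]
  rintro p ⟨_, _, _, h4⟩ ⟨_, _, h7, _⟩
  linarith

lemma _root_.GuillotineSep.congr {place place' : ι → Rect} {P : Rect} {S : Finset ι}
    (h : GuillotineSep place P S) :
    (∀ i ∈ S, place' i = place i) → GuillotineSep place' P S := by
  induction h with
  | base P S hS => exact fun _ => .base P S hS
  | vcut P S c h1 h2 hcross hL hR ihL ihR =>
    intro he
    have e1 : S.filter (fun i => (place' i).x2 ≤ c) = S.filter (fun i => (place i).x2 ≤ c) :=
      Finset.filter_congr (fun i hi => by rw [he i hi])
    have e2 : S.filter (fun i => ¬ (place' i).x2 ≤ c) =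
        S.filter (fun i => ¬ (place i).x2 ≤ c) :=
      Finset.filter_congr (fun i hi => by rw [he i hi])
    refine .vcut P S c h1 h2 (fun i hi => by rw [he i hi]; exact hcross i hi) ?_ ?_
    · rw [e1]; exact ihL (fun i hi => he i (Finset.mem_of_mem_filter i hi))
    · rw [e2]; exact ihR (fun i hi => he i (Finset.mem_of_mem_filter i hi))
  | hcut P S c h1 h2 hcross hB hT ihB ihT =>
    intro he
    have e1 : S.filter (fun i => (place' i).y2 ≤ c) = S.filter (fun i => (place i).y2 ≤ c) :=
      Finset.filter_congr (fun i hi => by rw [he i hi])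
    have e2 : S.filter (fun i => ¬ (place' i).y2 ≤ c) =
        S.filter (fun i => ¬ (place i).y2 ≤ c) :=
      Finset.filter_congr (fun i hi => by rw [he i hi])
    refine .hcut P S c h1 h2 (fun i hi => by rw [he i hi]; exact hcross i hi) ?_ ?_
    · rw [e1]; exact ihB (fun i hi => he i (Finset.mem_of_mem_filter i hi))
    · rw [e2]; exact ihT (fun i hi => he i (Finset.mem_of_mem_filter i hi))

lemma _root_.GuillotineSep.anti {place : ι → Rect} {P : Rect} {S : Finset ι}
    (h : GuillotineSep place P S) : ∀ S' ⊆ S, GuillotineSep place P S' := by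
  induction h with
  | base P S hS =>
    exact fun S' hS' => .base P S' (le_trans (Finset.card_le_card hS') hS)
  | vcut P S c h1 h2 hcross hL hR ihL ihR =>
    intro S' hS'
    exact .vcut P S' c h1 h2 (fun i hi => hcross i (hS' hi))
      (ihL _ (Finset.filter_subset_filter _ hS')) (ihR _ (Finset.filter_subset_filter _ hS'))
  | hcut P S c h1 h2 hcross hB hT ihB ihT =>
    intro S' hS'
    exact .hcut P S' c h1 h2 (fun i hi => hcross i (hS' hi))
      (ihB _ (Finset.filter_subset_filter _ hS')) (ihT _ (Finset.filter_subset_filter _ hS'))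

lemma _root_.GuillotineSep.translate {place : ι → Rect} {P : Rect} {S : Finset ι}
    (h : GuillotineSep place P S) (dx dy : ℝ) :
    GuillotineSep (fun i => tr dx dy (place i)) (tr dx dy P) S := by
  induction h with
  | base P S hS => exact .base _ S hS
  | vcut P S c h1 h2 hcross hL hR ihL ihR =>
    have e1 : S.filter (fun i => (tr dx dy (place i)).x2 ≤ c + dx) =
        S.filter (fun i => (place i).x2 ≤ c) :=
      Finset.filter_congr (fun i _ => by simp)
    have e2 : S.filter (fun i => ¬ (tr dx dy (place i)).x2 ≤ c + dx) =
        S.filter (fun i => ¬ (place i).x2 ≤ c) :=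
      Finset.filter_congr (fun i _ => by simp)
    refine .vcut _ S (c + dx) (by simp [tr]; linarith) (by simp [tr]; linarith)
      (fun i hi => by rcases hcross i hi with h | h
                      · exact Or.inl (by simp; linarith)
                      · exact Or.inr (by simp; linarith)) ?_ ?_
    · rw [e1]
      have : (⟨(tr dx dy P).x1, c + dx, (tr dx dy P).y1, (tr dx dy P).y2⟩ : Rect) =
          tr dx dy ⟨P.x1, c, P.y1, P.y2⟩ := rfl
      rw [this]; exact ihL
    · rw [e2]
      have : (⟨c + dx, (tr dx dy P).x2, (tr dx dy P).y1, (tr dx dy P).y2⟩ : Rect) =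
          tr dx dy ⟨c, P.x2, P.y1, P.y2⟩ := rfl
      rw [this]; exact ihR
  | hcut P S c h1 h2 hcross hB hT ihB ihT =>
    have e1 : S.filter (fun i => (tr dx dy (place i)).y2 ≤ c + dy) =
        S.filter (fun i => (place i).y2 ≤ c) :=
      Finset.filter_congr (fun i _ => by simp)
    have e2 : S.filter (fun i => ¬ (tr dx dy (place i)).y2 ≤ c + dy) =
        S.filter (fun i => ¬ (place i).y2 ≤ c) :=
      Finset.filter_congr (fun i _ => by simp)
    refine .hcut _ S (c + dy) (by simp [tr]; linarith) (by simp [tr]; linarith)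
      (fun i hi => by rcases hcross i hi with h | h
                      · exact Or.inl (by simp; linarith)
                      · exact Or.inr (by simp; linarith)) ?_ ?_
    · rw [e1]
      have : (⟨(tr dx dy P).x1, (tr dx dy P).x2, (tr dx dy P).y1, c + dy⟩ : Rect) =
          tr dx dy ⟨P.x1, P.x2, P.y1, c⟩ := rfl
      rw [this]; exact ihB
    · rw [e2]
      have : (⟨(tr dx dy P).x1, (tr dx dy P).x2, c + dy, (tr dx dy P).y2⟩ : Rect) =
          tr dx dy ⟨P.x1, P.x2, c, P.y2⟩ := rfl
      rw [this]; exact ihT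

lemma _root_.GuillotineSep.flip {place : ι → Rect} {P : Rect} {S : Finset ι}
    (h : GuillotineSep place P S) :
    GuillotineSep (fun i => fl (place i)) (fl P) S := by
  induction h with
  | base P S hS => exact .base _ S hS
  | vcut P S c h1 h2 hcross hL hR ihL ihR =>
    refine .hcut _ S c h1 h2 (fun i hi => hcross i hi) ?_ ?_
    · have : (⟨(fl P).x1, (fl P).x2, (fl P).y1, c⟩ : Rect) = fl ⟨P.x1, c, P.y1, P.y2⟩ := rfl
      rw [this]; exact ihL
    · have : (⟨(fl P).x1, (fl P).x2, c, (fl P).y2⟩ : Rect) = fl ⟨c, P.x2, P.y1, P.y2⟩ := rfl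
      rw [this]; exact ihR
  | hcut P S c h1 h2 hcross hB hT ihB ihT =>
    refine .vcut _ S c h1 h2 (fun i hi => hcross i hi) ?_ ?_
    · have : (⟨(fl P).x1, c, (fl P).y1, (fl P).y2⟩ : Rect) = fl ⟨P.x1, P.x2, P.y1, c⟩ := rfl
      rw [this]; exact ihB
    · have : (⟨c, (fl P).x2, (fl P).y1, (fl P).y2⟩ : Rect) = fl ⟨P.x1, P.x2, c, P.y2⟩ := rfl
      rw [this]; exact ihT

end RC
namespace RC

variable {ι : Type*}

lemma genlargeX {place : ι → Rect} {W u w : ℝ} {S : Finset ι}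
    (h : GuillotineSep place ⟨0, w, 0, u⟩ S) (hin : ∀ i ∈ S, (place i).x2 ≤ w)
    (h0 : 0 < w) (hW : w ≤ W) : GuillotineSep place ⟨0, W, 0, u⟩ S := by
  rcases eq_or_lt_of_le hW with rfl | hlt
  · exact h
  · refine .vcut _ _ w h0 hlt (fun i hi => Or.inl (hin i hi)) ?_ ?_
    · rw [Finset.filter_true_of_mem (fun i hi => hin i hi)]
      exact h
    · rw [Finset.filter_false_of_mem (fun i hi hne => hne (hin i hi))]
      exact .base _ _ (by simp)

lemma genlargeY {place : ι → Rect} {W u v : ℝ} {S : Finset ι}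
    (h : GuillotineSep place ⟨0, W, 0, u⟩ S) (hin : ∀ i ∈ S, (place i).y2 ≤ u)
    (h0 : 0 < u) (hv : u ≤ v) : GuillotineSep place ⟨0, W, 0, v⟩ S := by
  rcases eq_or_lt_of_le hv with rfl | hlt
  · exact h
  · refine .hcut _ _ u h0 hlt (fun i hi => Or.inl (hin i hi)) ?_ ?_
    · rw [Finset.filter_true_of_mem (fun i hi => hin i hi)]
      exact h
    · rw [Finset.filter_false_of_mem (fun i hi hne => hne (hin i hi))]
      exact .base _ _ (by simp)

lemma genlargeYdown {place : ι → Rect} {W l t : ℝ} {S : Finset ι}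
    (h : GuillotineSep place ⟨0, W, l, t⟩ S)
    (hy2 : ∀ i ∈ S, l < (place i).y2) (hy1 : ∀ i ∈ S, l ≤ (place i).y1)
    (hl : 0 ≤ l) (hlt : l < t) : GuillotineSep place ⟨0, W, 0, t⟩ S := by
  rcases eq_or_lt_of_le hl with rfl | hl'
  · exact h
  · refine .hcut _ _ l hl' hlt (fun i hi => Or.inr (hy1 i hi)) ?_ ?_
    · rw [Finset.filter_false_of_mem (fun i hi => not_le.2 (hy2 i hi))]
      exact .base _ _ (by simp)
    · rw [Finset.filter_true_of_mem (fun i hi => not_le.2 (hy2 i hi))]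
      exact h

/-- A "row" of total height `u` inside a landscape strip `[0,N] × [0,u]`. -/
def Row (wd ht : ι → ℝ) (N u : ℝ) (S : Finset ι) : Prop :=
  ∃ place : ι → Rect, IsPackingRot wd ht S place ⟨0, N, 0, u⟩ ∧
    GuillotineSep place ⟨0, N, 0, u⟩ S ∧ ∀ i ∈ S, 0 < (place i).y2

lemma Row.empty (wd ht : ι → ℝ) (N u : ℝ) : Row wd ht N u (∅ : Finset ι) := by
  refine ⟨fun _ => ⟨0, 0, 0, 0⟩, ⟨?_, ?_, ?_⟩, .base _ _ (by simp), ?_⟩ <;>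
    simp

lemma Row.mono {wd ht : ι → ℝ} {N u v : ℝ} {S : Finset ι}
    (h : Row wd ht N u S) (huv : u ≤ v) : Row wd ht N v S := by
  rcases S.eq_empty_or_nonempty with rfl | ⟨i, hi⟩
  · exact Row.empty wd ht N v
  · obtain ⟨pl, hP, hG, hs⟩ := h
    have h0 : 0 < u := lt_of_lt_of_le (hs i hi) (hP.hin i hi).2.2.2
    refine ⟨pl, ⟨hP.hdims, fun j hj => ?_, hP.hdisj⟩, ?_, hs⟩
    · obtain ⟨a, b, c, d⟩ := hP.hin j hj
      exact ⟨a, b, c, le_trans d huv⟩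
    · exact genlargeY hG (fun j hj => (hP.hin j hj).2.2.2) h0 huv

lemma filter_union_left [DecidableEq ι] {S1 S2 : Finset ι} {p : ι → Prop} [DecidablePred p]
    (h1 : ∀ i ∈ S1, p i) (h2 : ∀ i ∈ S2, ¬ p i) : (S1 ∪ S2).filter p = S1 := by
  ext i
  simp only [Finset.mem_filter, Finset.mem_union]
  constructor
  · rintro ⟨hi | hi, hp⟩
    · exact hi
    · exact absurd hp (h2 i hi)
  · exact fun hi => ⟨Or.inl hi, h1 i hi⟩

lemma filter_union_right [DecidableEq ι] {S1 S2 : Finset ι} {p : ι → Prop} [DecidablePred p]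
    (h1 : ∀ i ∈ S1, p i) (h2 : ∀ i ∈ S2, ¬ p i) :
    (S1 ∪ S2).filter (fun i => ¬ p i) = S2 := by
  ext i
  simp only [Finset.mem_filter, Finset.mem_union]
  constructor
  · rintro ⟨hi | hi, hp⟩
    · exact absurd (h1 i hi) hp
    · exact hi
  · exact fun hi => ⟨Or.inr hi, h2 i hi⟩

lemma Row.stack [DecidableEq ι] {wd ht : ι → ℝ} {N a b : ℝ} {S1 S2 : Finset ι}
    (h1 : Row wd ht N a S1) (h2 : Row wd ht N b S2) (hd : Disjoint S1 S2)
    (ha : 0 ≤ a) (hb : 0 ≤ b) : Row wd ht N (a + b) (S1 ∪ S2) := by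
  rcases S2.eq_empty_or_nonempty with rfl | ⟨j0, hj0⟩
  · rw [Finset.union_empty]
    exact h1.mono (by linarith)
  obtain ⟨p2, hP2, hG2, hs2⟩ := h2
  have hb' : 0 < b := lt_of_lt_of_le (hs2 j0 hj0) (hP2.hin j0 hj0).2.2.2
  have etr : tr 0 a (⟨0, N, 0, b⟩ : Rect) = ⟨0, N, a, a + b⟩ := by
    simp only [tr, Rect.mk.injEq]
    refine ⟨by ring, by ring, by ring, by ring⟩
  rcases S1.eq_empty_or_nonempty with rfl | ⟨i0, hi0⟩
  · rw [Finset.empty_union]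
    refine ⟨fun i => tr 0 a (p2 i), ⟨?_, ?_, ?_⟩, ?_, ?_⟩
    · intro i hi
      rcases hP2.hdims i hi with ⟨e1, e2⟩ | ⟨e1, e2⟩
      · exact Or.inl (by simp [e1, e2])
      · exact Or.inr (by simp [e1, e2])
    · intro i hi
      obtain ⟨q1, q2, q3, q4⟩ := hP2.hin i hi
      dsimp only at q1 q2 q3 q4
      refine ⟨?_, ?_, ?_, ?_⟩ <;> dsimp only [tr] <;> linarith
    · exact fun i hi j hj hne => disj_tr (hP2.hdisj i hi j hj hne)
    · have := hG2.translate 0 a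
      rw [etr] at this
      exact genlargeYdown this
        (fun i hi => by simp; linarith [hs2 i hi])
        (fun i hi => by simp; linarith [show (0:ℝ) ≤ (p2 i).y1 from (hP2.hin i hi).2.2.1])
        ha (by linarith)
    · intro i hi
      simp
      linarith [hs2 i hi]
  obtain ⟨p1, hP1, hG1, hs1⟩ := h1
  have ha' : 0 < a := lt_of_lt_of_le (hs1 i0 hi0) (hP1.hin i0 hi0).2.2.2
  classical
  set pl : ι → Rect := fun i => if i ∈ S1 then p1 i else tr 0 a (p2 i) with hpl
  have hpl1 : ∀ i ∈ S1, pl i = p1 i := fun i hi => by simp [hpl, hi]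
  have hpl2 : ∀ i ∈ S2, pl i = tr 0 a (p2 i) := fun i hi => by
    simp [hpl, Finset.disjoint_right.1 hd hi]
  have hy2le : ∀ i ∈ S1, (pl i).y2 ≤ a := fun i hi => by
    rw [hpl1 i hi]; exact (hP1.hin i hi).2.2.2
  have hy2gt : ∀ i ∈ S2, a < (pl i).y2 := fun i hi => by
    rw [hpl2 i hi]; simp; linarith [hs2 i hi]
  have hy1ge : ∀ i ∈ S2, a ≤ (pl i).y1 := fun i hi => by
    rw [hpl2 i hi]; simp; linarith [show (0:ℝ) ≤ (p2 i).y1 from (hP2.hin i hi).2.2.1]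
  refine ⟨pl, ⟨?_, ?_, ?_⟩, ?_, ?_⟩
  · intro i hi
    rcases Finset.mem_union.1 hi with hi | hi
    · rw [hpl1 i hi]; exact hP1.hdims i hi
    · rw [hpl2 i hi]
      rcases hP2.hdims i hi with ⟨e1, e2⟩ | ⟨e1, e2⟩
      · exact Or.inl (by simp [e1, e2])
      · exact Or.inr (by simp [e1, e2])
  · intro i hi
    rcases Finset.mem_union.1 hi with hi | hi
    · rw [hpl1 i hi]
      obtain ⟨q1, q2, q3, q4⟩ := hP1.hin i hi
      dsimp only at q1 q2 q3 q4
      refine ⟨?_, ?_, ?_, ?_⟩ <;> dsimp only <;> linarith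
    · rw [hpl2 i hi]
      obtain ⟨q1, q2, q3, q4⟩ := hP2.hin i hi
      dsimp only at q1 q2 q3 q4
      refine ⟨?_, ?_, ?_, ?_⟩ <;> dsimp only [tr] <;> linarith
  · intro i hi j hj hne
    rcases Finset.mem_union.1 hi with hi | hi <;> rcases Finset.mem_union.1 hj with hj | hj
    · rw [hpl1 i hi, hpl1 j hj]; exact hP1.hdisj i hi j hj hne
    · exact disj_of_below (le_trans (hy2le i hi) (hy1ge j hj))
    · exact (disj_of_below (le_trans (hy2le j hj) (hy1ge i hi))).symm
    · rw [hpl2 i hi, hpl2 j hj]; exact disj_tr (hP2.hdisj i hi j hj hne)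
  · refine .hcut _ _ a ha' (by dsimp only; linarith)
      (fun i hi => by
        rcases Finset.mem_union.1 hi with hi | hi
        · exact Or.inl (hy2le i hi)
        · exact Or.inr (hy1ge i hi)) ?_ ?_
    · rw [filter_union_left hy2le (fun i hi => not_le.2 (hy2gt i hi))]
      exact hG1.congr hpl1
    · rw [filter_union_right hy2le (fun i hi => not_le.2 (hy2gt i hi))]
      have := hG2.translate 0 a
      rw [etr] at this
      exact this.congr hpl2
  · intro i hi
    rcases Finset.mem_union.1 hi with hi | hi
    · rw [hpl1 i hi]; exact hs1 i hi
    · rw [hpl2 i hi]; simp; linarith [hs2 i hi]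

end RC
namespace RC

variable {ι : Type*}

/-- Build a (rotated) row from a guillotine sub-packing of a piece `Q`:
the row height is `Q`'s width. -/
lemma rowRot {wd ht : ι → ℝ} {N : ℝ} {Q : Rect} {S : Finset ι} {place : ι → Rect}
    (hG : GuillotineSep place Q S)
    (hsub : ∀ i ∈ S, (place i).SubRect Q)
    (hw : ∀ i ∈ S, (place i).width = wd i) (hh : ∀ i ∈ S, (place i).height = ht i)
    (hpos : ∀ i ∈ S, 0 < wd i)
    (hd : ∀ i ∈ S, ∀ j ∈ S, i ≠ j → Disjoint (place i).toSet (place j).toSet)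
    (hq1 : 0 < Q.y2 - Q.y1) (hq2 : Q.y2 - Q.y1 ≤ N) :
    Row wd ht N (Q.x2 - Q.x1) S := by
  set pl : ι → Rect := fun i => fl (tr (-Q.x1) (-Q.y1) (place i)) with hpl
  have etr : tr (-Q.x1) (-Q.y1) Q = ⟨0, Q.x2 - Q.x1, 0, Q.y2 - Q.y1⟩ := by
    simp only [tr, Rect.mk.injEq]
    refine ⟨by ring, by ring, by ring, by ring⟩
  have efl : fl (⟨0, Q.x2 - Q.x1, 0, Q.y2 - Q.y1⟩ : Rect) =
      ⟨0, Q.y2 - Q.y1, 0, Q.x2 - Q.x1⟩ := rfl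
  refine ⟨pl, ⟨?_, ?_, ?_⟩, ?_, ?_⟩
  · intro i hi
    refine Or.inr ⟨?_, ?_⟩
    · have := hh i hi
      simp only [hpl, fl_width, tr_height]
      exact this
    · have := hw i hi
      simp only [hpl, fl_height, tr_width]
      exact this
  · intro i hi
    obtain ⟨q1, q2, q3, q4⟩ := hsub i hi
    refine ⟨?_, ?_, ?_, ?_⟩ <;> simp only [hpl, fl_x1, fl_x2, fl_y1, fl_y2, tr_x1, tr_x2,
      tr_y1, tr_y2] <;> linarith
  · exact fun i hi j hj hne => disj_fl (disj_tr (hd i hi j hj hne))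
  · have h1 := (hG.translate (-Q.x1) (-Q.y1)).flip
    rw [etr, efl] at h1
    refine genlargeX h1 (fun i hi => ?_) hq1 hq2
    simp only [hpl, fl_x2, tr_y2]
    linarith [(hsub i hi).2.2.2]
  · intro i hi
    have e : (pl i).y2 = (place i).x2 - Q.x1 := by simp [hpl]; ring
    rw [e]
    have := hw i hi
    rw [Rect.width] at this
    linarith [(hsub i hi).1, hpos i hi]

/-- Build an (unrotated) row from a guillotine sub-packing of a piece `Q`:
the row height is `Q`'s height. -/
lemma rowPlain {wd ht : ι → ℝ} {N : ℝ} {Q : Rect} {S : Finset ι} {place : ι → Rect}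
    (hG : GuillotineSep place Q S)
    (hsub : ∀ i ∈ S, (place i).SubRect Q)
    (hw : ∀ i ∈ S, (place i).width = wd i) (hh : ∀ i ∈ S, (place i).height = ht i)
    (hpos : ∀ i ∈ S, 0 < ht i)
    (hd : ∀ i ∈ S, ∀ j ∈ S, i ≠ j → Disjoint (place i).toSet (place j).toSet)
    (hq1 : 0 < Q.x2 - Q.x1) (hq2 : Q.x2 - Q.x1 ≤ N) :
    Row wd ht N (Q.y2 - Q.y1) S := by
  set pl : ι → Rect := fun i => tr (-Q.x1) (-Q.y1) (place i) with hpl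
  have etr : tr (-Q.x1) (-Q.y1) Q = ⟨0, Q.x2 - Q.x1, 0, Q.y2 - Q.y1⟩ := by
    simp only [tr, Rect.mk.injEq]
    refine ⟨by ring, by ring, by ring, by ring⟩
  refine ⟨pl, ⟨?_, ?_, ?_⟩, ?_, ?_⟩
  · intro i hi
    refine Or.inl ⟨?_, ?_⟩
    · have := hw i hi
      simp only [hpl, tr_width]
      exact this
    · have := hh i hi
      simp only [hpl, tr_height]
      exact this
  · intro i hi
    obtain ⟨q1, q2, q3, q4⟩ := hsub i hi
    refine ⟨?_, ?_, ?_, ?_⟩ <;> simp only [hpl, tr_x1, tr_x2, tr_y1, tr_y2] <;> linarith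
  · exact fun i hi j hj hne => disj_tr (hd i hi j hj hne)
  · have h1 := hG.translate (-Q.x1) (-Q.y1)
    rw [etr] at h1
    refine genlargeX h1 (fun i hi => ?_) hq1 hq2
    simp only [hpl, tr_x2]
    linarith [(hsub i hi).2.1]
  · intro i hi
    have e : (pl i).y2 = (place i).y2 - Q.y1 := by simp [hpl]; ring
    rw [e]
    have := hh i hi
    rw [Rect.height] at this
    linarith [(hsub i hi).2.2.1, hpos i hi]

/-- A packing of `S` into the landscape bin `[0,N] × [0,β]`. -/
def LPack (wd ht : ι → ℝ) (N β : ℝ) (S : Finset ι) : Prop :=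
  ∃ place : ι → Rect, IsPackingRot wd ht S place ⟨0, N, 0, β⟩ ∧
    GuillotineSep place ⟨0, N, 0, β⟩ S

lemma LPack.empty (wd ht : ι → ℝ) (N β : ℝ) : LPack wd ht N β (∅ : Finset ι) := by
  refine ⟨fun _ => ⟨0, 0, 0, 0⟩, ⟨?_, ?_, ?_⟩, .base _ _ (by simp)⟩ <;> simp

lemma LPack.single {wd ht : ι → ℝ} {N β : ℝ} (i : ι)
    (hwN : wd i ≤ N) (hhN : ht i ≤ N) (_hβ : 0 ≤ β)
    (hm : wd i ≤ β ∨ ht i ≤ β) : LPack wd ht N β {i} := by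
  rcases hm with hm | hm
  · refine ⟨fun _ => ⟨0, ht i, 0, wd i⟩, ⟨?_, ?_, ?_⟩, .base _ _ (by simp)⟩
    · intro j hj
      rw [Finset.mem_singleton] at hj
      subst hj
      refine Or.inr ⟨?_, ?_⟩ <;> simp [Rect.width, Rect.height]
    · intro j hj
      exact ⟨le_refl _, hhN, le_refl _, hm⟩
    · intro j hj k hk hne
      rw [Finset.mem_singleton] at hj hk
      exact absurd (hj.trans hk.symm) hne
  · refine ⟨fun _ => ⟨0, wd i, 0, ht i⟩, ⟨?_, ?_, ?_⟩, .base _ _ (by simp)⟩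
    · intro j hj
      rw [Finset.mem_singleton] at hj
      subst hj
      refine Or.inl ⟨?_, ?_⟩ <;> simp [Rect.width, Rect.height]
    · intro j hj
      rw [Finset.mem_singleton] at hj
      subst hj
      exact ⟨le_refl _, hwN, le_refl _, hm⟩
    · intro j hj k hk hne
      rw [Finset.mem_singleton] at hj hk
      exact absurd (hj.trans hk.symm) hne

/-- Pack the contents of a piece `Q` (rotated) into the landscape bin. -/
lemma lpackRot {wd ht : ι → ℝ} {N β : ℝ} {Q : Rect} {S : Finset ι} {place : ι → Rect}
    (hG : GuillotineSep place Q S)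
    (hsub : ∀ i ∈ S, (place i).SubRect Q)
    (hw : ∀ i ∈ S, (place i).width = wd i) (hh : ∀ i ∈ S, (place i).height = ht i)
    (hd : ∀ i ∈ S, ∀ j ∈ S, i ≠ j → Disjoint (place i).toSet (place j).toSet)
    (hq1 : 0 < Q.y2 - Q.y1) (hq2 : Q.y2 - Q.y1 ≤ N)
    (hq3 : 0 < Q.x2 - Q.x1) (hq4 : Q.x2 - Q.x1 ≤ β) :
    LPack wd ht N β S := by
  set pl : ι → Rect := fun i => fl (tr (-Q.x1) (-Q.y1) (place i)) with hpl
  have etr : tr (-Q.x1) (-Q.y1) Q = ⟨0, Q.x2 - Q.x1, 0, Q.y2 - Q.y1⟩ := by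
    simp only [tr, Rect.mk.injEq]
    refine ⟨by ring, by ring, by ring, by ring⟩
  have efl : fl (⟨0, Q.x2 - Q.x1, 0, Q.y2 - Q.y1⟩ : Rect) =
      ⟨0, Q.y2 - Q.y1, 0, Q.x2 - Q.x1⟩ := rfl
  refine ⟨pl, ⟨?_, ?_, ?_⟩, ?_⟩
  · intro i hi
    refine Or.inr ⟨?_, ?_⟩
    · have := hh i hi
      simp only [hpl, fl_width, tr_height]
      exact this
    · have := hw i hi
      simp only [hpl, fl_height, tr_width]
      exact this
  · intro i hi
    obtain ⟨q1, q2, q3, q4⟩ := hsub i hi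
    refine ⟨?_, ?_, ?_, ?_⟩ <;> simp only [hpl, fl_x1, fl_x2, fl_y1, fl_y2, tr_x1, tr_x2,
      tr_y1, tr_y2] <;> linarith
  · exact fun i hi j hj hne => disj_fl (disj_tr (hd i hi j hj hne))
  · have h1 := (hG.translate (-Q.x1) (-Q.y1)).flip
    rw [etr, efl] at h1
    have h2 : GuillotineSep pl (⟨0, N, 0, Q.x2 - Q.x1⟩ : Rect) S := by
      refine genlargeX h1 (fun i hi => ?_) hq1 hq2
      simp only [hpl, fl_x2, tr_y2]
      linarith [(hsub i hi).2.2.2]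
    refine genlargeY h2 (fun i hi => ?_) hq3 hq4
    simp only [hpl, fl_y2, tr_x2]
    linarith [(hsub i hi).2.1]

/-- Pack the contents of a piece `Q` (unrotated) into the landscape bin. -/
lemma lpackPlain {wd ht : ι → ℝ} {N β : ℝ} {Q : Rect} {S : Finset ι} {place : ι → Rect}
    (hG : GuillotineSep place Q S)
    (hsub : ∀ i ∈ S, (place i).SubRect Q)
    (hw : ∀ i ∈ S, (place i).width = wd i) (hh : ∀ i ∈ S, (place i).height = ht i)
    (hd : ∀ i ∈ S, ∀ j ∈ S, i ≠ j → Disjoint (place i).toSet (place j).toSet)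
    (hq1 : 0 < Q.x2 - Q.x1) (hq2 : Q.x2 - Q.x1 ≤ N)
    (hq3 : 0 < Q.y2 - Q.y1) (hq4 : Q.y2 - Q.y1 ≤ β) :
    LPack wd ht N β S := by
  set pl : ι → Rect := fun i => tr (-Q.x1) (-Q.y1) (place i) with hpl
  have etr : tr (-Q.x1) (-Q.y1) Q = ⟨0, Q.x2 - Q.x1, 0, Q.y2 - Q.y1⟩ := by
    simp only [tr, Rect.mk.injEq]
    refine ⟨by ring, by ring, by ring, by ring⟩
  refine ⟨pl, ⟨?_, ?_, ?_⟩, ?_⟩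
  · intro i hi
    refine Or.inl ⟨?_, ?_⟩
    · have := hw i hi
      simp only [hpl, tr_width]
      exact this
    · have := hh i hi
      simp only [hpl, tr_height]
      exact this
  · intro i hi
    obtain ⟨q1, q2, q3, q4⟩ := hsub i hi
    refine ⟨?_, ?_, ?_, ?_⟩ <;> simp only [hpl, tr_x1, tr_x2, tr_y1, tr_y2] <;> linarith
  · exact fun i hi j hj hne => disj_tr (hd i hi j hj hne)
  · have h1 := hG.translate (-Q.x1) (-Q.y1)
    rw [etr] at h1
    have h2 : GuillotineSep pl (⟨0, N, 0, Q.y2 - Q.y1⟩ : Rect) S := by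
      refine genlargeX h1 (fun i hi => ?_) hq1 hq2
      simp only [hpl, tr_x2]
      linarith [(hsub i hi).2.1]
    refine genlargeY h2 (fun i hi => ?_) hq3 hq4
    simp only [hpl, tr_y2]
    linarith [(hsub i hi).2.2.2]

end RC
namespace RC

variable {ι : Type*}

/-- Degenerate items (one nonpositive dimension) can be placed as a "tower"
of empty rectangles with distinct `y2` levels inside `[0,N] × [lo,hi]`. -/
lemma degTower {wd ht : ι → ℝ} {N : ℝ} (D : Finset ι)
    (hwh : ∀ a ∈ D, (wd a ≤ 0 ∨ ht a ≤ 0) ∧ wd a ≤ N ∧ ht a ≤ N) :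
    ∀ lo hi : ℝ, 0 ≤ lo → lo < hi → ∃ place : ι → Rect,
      (∀ a ∈ D, ((place a).width = wd a ∧ (place a).height = ht a) ∨
          ((place a).width = ht a ∧ (place a).height = wd a)) ∧
      (∀ a ∈ D, (place a).x1 = 0 ∧ (place a).x2 ≤ N ∧ lo < (place a).y2 ∧
          (place a).y2 ≤ hi ∧ (place a).y2 ≤ (place a).y1) ∧
      GuillotineSep place ⟨0, N, lo, hi⟩ D := by
  classical
  induction D using Finset.induction_on with
  | empty =>
    intro lo hi _ _
    exact ⟨fun _ => ⟨0, 0, 0, 0⟩, by simp, by simp, .base _ _ (by simp)⟩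
  | @insert a D ha ih =>
    intro lo hi hlo hlohi
    have hwa := (hwh a (Finset.mem_insert_self a D)).2.1
    have hha := (hwh a (Finset.mem_insert_self a D)).2.2
    set c : ℝ := (lo + hi) / 2 with hc
    set t : ℝ := (lo + c) / 2 with htdef
    have hlc : lo < c := by rw [hc]; linarith
    have hchi : c < hi := by rw [hc]; linarith
    have hlt : lo < t := by rw [htdef]; linarith
    have htc : t < c := by rw [htdef]; linarith
    obtain ⟨pD, hdims, hprops, hG⟩ := ih (fun b hb => hwh b (Finset.mem_insert_of_mem hb)) c hi
      (le_trans hlo (le_of_lt hlc)) hchi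
    set ra : Rect := if ht a ≤ 0 then ⟨0, wd a, t - ht a, t⟩ else ⟨0, ht a, t - wd a, t⟩
      with hra
    have hwd0 : ¬ ht a ≤ 0 → wd a ≤ 0 := by
      intro h
      rcases (hwh a (Finset.mem_insert_self a D)).1 with h' | h'
      · exact h'
      · exact absurd h' h
    have hray2 : ra.y2 = t := by
      rw [hra]; split <;> rfl
    have hray1 : ra.y2 ≤ ra.y1 := by
      rw [hra]; split_ifs with h
      · dsimp only; linarith
      · dsimp only; linarith [hwd0 h]
    set pl : ι → Rect := Function.update pD a ra with hpl
    have hpla : pl a = ra := Function.update_self a ra pD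
    have hplb : ∀ b ∈ D, pl b = pD b := fun b hb =>
      Function.update_of_ne (by rintro rfl; exact ha hb) ra pD
    refine ⟨pl, ?_, ?_, ?_⟩
    · intro b hb
      rcases Finset.mem_insert.1 hb with rfl | hb
      · rw [hpla, hra]
        split
        · exact Or.inl ⟨by simp [Rect.width], by simp [Rect.height]⟩
        · exact Or.inr ⟨by simp [Rect.width], by simp [Rect.height]⟩
      · rw [hplb b hb]; exact hdims b hb
    · intro b hb
      rcases Finset.mem_insert.1 hb with rfl | hb
      · rw [hpla]
        refine ⟨?_, ?_, ?_, ?_, hray1⟩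
        · rw [hra]; split <;> rfl
        · rw [hra]; split <;> dsimp only <;> assumption
        · rw [hray2]; exact hlt
        · rw [hray2]; linarith
      · rw [hplb b hb]
        obtain ⟨q1, q2, q3, q4, q5⟩ := hprops b hb
        exact ⟨q1, q2, lt_trans hlc q3, q4, q5⟩
    · refine .hcut _ _ c hlc hchi ?_ ?_ ?_
      · intro b hb
        rcases Finset.mem_insert.1 hb with rfl | hb
        · exact Or.inl (by rw [hpla, hray2]; linarith)
        · refine Or.inr ?_
          rw [hplb b hb]
          obtain ⟨_, _, q3, _, q5⟩ := hprops b hb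
          linarith
      · have e : (insert a D).filter (fun i => (pl i).y2 ≤ c) = {a} := by
          ext b
          simp only [Finset.mem_filter, Finset.mem_insert, Finset.mem_singleton]
          constructor
          · rintro ⟨rfl | hb, hy⟩
            · rfl
            · rw [hplb b hb] at hy
              obtain ⟨_, _, q3, _, _⟩ := hprops b hb
              linarith
          · rintro rfl
            exact ⟨Or.inl rfl, by rw [hpla, hray2]; linarith⟩
        rw [e]
        exact .base _ _ (by simp)
      · have e : (insert a D).filter (fun i => ¬ (pl i).y2 ≤ c) = D := by
          ext b
          simp only [Finset.mem_filter, Finset.mem_insert]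
          constructor
          · rintro ⟨rfl | hb, hy⟩
            · exact absurd (by rw [hpla, hray2]; linarith) hy
            · exact hb
          · intro hb
            refine ⟨Or.inr hb, ?_⟩
            rw [hplb b hb]
            obtain ⟨_, _, q3, _, _⟩ := hprops b hb
            linarith
        rw [e]
        exact hG.congr hplb

end RC
namespace RC

variable {ι : Type*}

set_option maxHeartbeats 1000000 in
lemma key [DecidableEq ι] {wd ht : ι → ℝ} {N ε : ℝ} (hN : 0 < N) (hε : 0 < ε)
    (hε' : ε ≤ 1 / 10) {place : ι → Rect} {G : Finset ι}
    (hw : ∀ i ∈ G, (place i).width = wd i) (hh : ∀ i ∈ G, (place i).height = ht i)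
    (hposw : ∀ i ∈ G, 0 < wd i) (hposh : ∀ i ∈ G, 0 < ht i)
    (hdisj : ∀ i ∈ G, ∀ j ∈ G, i ≠ j → Disjoint (place i).toSet (place j).toSet)
    (hmass : ∀ i ∈ G, wd i < (1 - ε) * N ∨ ht i < (1 - ε) * N)
    (hwN : ∀ i ∈ G, wd i ≤ N) (hhN : ∀ i ∈ G, ht i ≤ N) :
    ∀ P S, GuillotineSep place P S → S ⊆ G → (∀ i ∈ S, (place i).SubRect P) →
      0 ≤ P.x1 → P.x2 ≤ N → 0 ≤ P.y1 → P.y2 ≤ N →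
      (1 - ε / 2) * N < P.x2 - P.x1 → (1 - ε / 2) * N < P.y2 - P.y1 →
      ∃ S1 ⊆ S, LPack wd ht N ((1 - ε / 2) * N) S1 ∧
        ∃ u, 0 ≤ u ∧
          u ≤ N / 2 + (P.x2 - P.x1 - (1 - ε / 2) * N) + (P.y2 - P.y1 - (1 - ε / 2) * N) ∧
          Row wd ht N u (S \ S1) := by
  have hβpos : 0 < (1 - ε / 2) * N := by nlinarith
  have hβN : (1 - ε) * N ≤ (1 - ε / 2) * N := by nlinarith
  intro P S hGS
  induction hGS with
  | base P S hS =>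
    intro hSG hsub hx1 hx2 hy1 hy2 hWd hHt
    refine ⟨S, Finset.Subset.refl S, ?_, 0, le_refl 0, by linarith, ?_⟩
    · rcases S.eq_empty_or_nonempty with rfl | ⟨i, hi⟩
      · exact LPack.empty wd ht N _
      · have hcard : S.card = 1 := le_antisymm hS (Finset.card_pos.mpr ⟨i, hi⟩)
        obtain ⟨j, rfl⟩ := Finset.card_eq_one.1 hcard
        have hjG : j ∈ G := hSG (Finset.mem_singleton_self j)
        refine LPack.single j (hwN j hjG) (hhN j hjG) hβpos.le ?_
        rcases hmass j hjG with hm | hm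
        · exact Or.inl (by linarith)
        · exact Or.inr (by linarith)
    · rw [Finset.sdiff_self]
      exact Row.empty wd ht N 0
  | vcut P S c h1 h2 hcross hL hR ihL ihR =>
    intro hSG hsub hx1 hx2 hy1 hy2 hWd hHt
    have hc_le : c ≤ N := le_of_lt (lt_of_lt_of_le h2 hx2)
    have hcx1 : 0 ≤ c := le_trans hx1 (le_of_lt h1)
    set Sl := S.filter (fun i => (place i).x2 ≤ c) with hSl
    set Sr := S.filter (fun i => ¬ (place i).x2 ≤ c) with hSr
    have hSlG : Sl ⊆ G := (Finset.filter_subset _ S).trans hSG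
    have hSrG : Sr ⊆ G := (Finset.filter_subset _ S).trans hSG
    have hsubl : ∀ i ∈ Sl, (place i).SubRect ⟨P.x1, c, P.y1, P.y2⟩ := by
      intro i hi
      obtain ⟨q1, q2, q3, q4⟩ := hsub i (Finset.mem_of_mem_filter i hi)
      exact ⟨q1, (Finset.mem_filter.1 hi).2, q3, q4⟩
    have hsubr : ∀ i ∈ Sr, (place i).SubRect ⟨c, P.x2, P.y1, P.y2⟩ := by
      intro i hi
      obtain ⟨q1, q2, q3, q4⟩ := hsub i (Finset.mem_of_mem_filter i hi)
      rcases hcross i (Finset.mem_of_mem_filter i hi) with hco | hco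
      · exact absurd hco (Finset.mem_filter.1 hi).2
      · exact ⟨hco, q2, q3, q4⟩
    have hdisjoint_lr : Disjoint Sl Sr := Finset.disjoint_filter_filter_not S S _
    by_cases hA : (1 - ε / 2) * N < c - P.x1
    · obtain ⟨S1, hS1sub, hLP, u, hu0, hub, hrow⟩ :=
        ihL hSlG hsubl hx1 hc_le hy1 hy2 hA hHt
      dsimp only at hub
      have hrowr : Row wd ht N (P.x2 - c) Sr := by
        exact rowRot (Q := ⟨c, P.x2, P.y1, P.y2⟩) hR hsubr
          (fun i hi => hw i (hSrG hi)) (fun i hi => hh i (hSrG hi))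
          (fun i hi => hposw i (hSrG hi))
          (fun i hi j hj hne => hdisj i (hSrG hi) j (hSrG hj) hne)
          (by dsimp only; linarith) (by dsimp only; linarith)
      have hstack := hrow.stack hrowr
        (Finset.disjoint_of_subset_left (Finset.sdiff_subset) hdisjoint_lr)
        hu0 (by linarith)
      have eset : S \ S1 = (Sl \ S1) ∪ Sr := by
        ext i
        simp only [Finset.mem_sdiff, Finset.mem_union, Finset.mem_filter, hSl, hSr]
        constructor
        · rintro ⟨hiS, hnS1⟩
          by_cases hxc : (place i).x2 ≤ c
          · exact Or.inl ⟨⟨hiS, hxc⟩, hnS1⟩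
          · exact Or.inr ⟨hiS, hxc⟩
        · rintro (⟨⟨hiS, _⟩, hnS1⟩ | ⟨hiS, hxc⟩)
          · exact ⟨hiS, hnS1⟩
          · exact ⟨hiS, fun hiS1 => hxc (Finset.mem_filter.1 (hS1sub hiS1)).2⟩
      refine ⟨S1, hS1sub.trans (Finset.filter_subset _ S), hLP,
        u + (P.x2 - c), by linarith, by linarith, ?_⟩
      rw [eset]
      exact hstack
    · by_cases hB : (1 - ε / 2) * N < P.x2 - c
      · obtain ⟨S1, hS1sub, hLP, u, hu0, hub, hrow⟩ :=
          ihR hSrG hsubr hcx1 hx2 hy1 hy2 hB hHt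
        dsimp only at hub
        have hrowl : Row wd ht N (c - P.x1) Sl := by
          exact rowRot (Q := ⟨P.x1, c, P.y1, P.y2⟩) hL hsubl
            (fun i hi => hw i (hSlG hi)) (fun i hi => hh i (hSlG hi))
            (fun i hi => hposw i (hSlG hi))
            (fun i hi j hj hne => hdisj i (hSlG hi) j (hSlG hj) hne)
            (by dsimp only; linarith) (by dsimp only; linarith)
        have hstack := hrow.stack hrowl
          (Finset.disjoint_of_subset_left (Finset.sdiff_subset) hdisjoint_lr.symm)
          hu0 (by linarith)
        have eset : S \ S1 = (Sr \ S1) ∪ Sl := by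
          ext i
          simp only [Finset.mem_sdiff, Finset.mem_union, Finset.mem_filter, hSl, hSr]
          constructor
          · rintro ⟨hiS, hnS1⟩
            by_cases hxc : (place i).x2 ≤ c
            · exact Or.inr ⟨hiS, hxc⟩
            · exact Or.inl ⟨⟨hiS, hxc⟩, hnS1⟩
          · rintro (⟨⟨hiS, _⟩, hnS1⟩ | ⟨hiS, hxc⟩)
            · exact ⟨hiS, hnS1⟩
            · exact ⟨hiS, fun hiS1 => (Finset.mem_filter.1 (hS1sub hiS1)).2 hxc⟩
        refine ⟨S1, hS1sub.trans (Finset.filter_subset _ S), hLP,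
          u + (c - P.x1), by linarith, by linarith, ?_⟩
        rw [eset]
        exact hstack
      · by_cases hab : P.x2 - c ≤ c - P.x1
        · have hLP : LPack wd ht N ((1 - ε / 2) * N) Sl := by
            exact lpackRot (Q := ⟨P.x1, c, P.y1, P.y2⟩) hL hsubl
              (fun i hi => hw i (hSlG hi)) (fun i hi => hh i (hSlG hi))
              (fun i hi j hj hne => hdisj i (hSlG hi) j (hSlG hj) hne)
              (by dsimp only; linarith) (by dsimp only; linarith)
              (by dsimp only; linarith) (by dsimp only; linarith)
          have hrowr : Row wd ht N (P.x2 - c) Sr := by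
            exact rowRot (Q := ⟨c, P.x2, P.y1, P.y2⟩) hR hsubr
              (fun i hi => hw i (hSrG hi)) (fun i hi => hh i (hSrG hi))
              (fun i hi => hposw i (hSrG hi))
              (fun i hi j hj hne => hdisj i (hSrG hi) j (hSrG hj) hne)
              (by dsimp only; linarith) (by dsimp only; linarith)
          have eset : S \ Sl = Sr := by
            ext i
            simp only [Finset.mem_sdiff, Finset.mem_filter, hSl, hSr]
            tauto
          refine ⟨Sl, Finset.filter_subset _ S, hLP, P.x2 - c, by linarith, by linarith, ?_⟩
          rw [eset]
          exact hrowr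
        · have hLP : LPack wd ht N ((1 - ε / 2) * N) Sr := by
            exact lpackRot (Q := ⟨c, P.x2, P.y1, P.y2⟩) hR hsubr
              (fun i hi => hw i (hSrG hi)) (fun i hi => hh i (hSrG hi))
              (fun i hi j hj hne => hdisj i (hSrG hi) j (hSrG hj) hne)
              (by dsimp only; linarith) (by dsimp only; linarith)
              (by dsimp only; linarith) (by dsimp only; linarith)
          have hrowl : Row wd ht N (c - P.x1) Sl := by
            exact rowRot (Q := ⟨P.x1, c, P.y1, P.y2⟩) hL hsubl
              (fun i hi => hw i (hSlG hi)) (fun i hi => hh i (hSlG hi))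
              (fun i hi => hposw i (hSlG hi))
              (fun i hi j hj hne => hdisj i (hSlG hi) j (hSlG hj) hne)
              (by dsimp only; linarith) (by dsimp only; linarith)
          have eset : S \ Sr = Sl := by
            ext i
            simp only [Finset.mem_sdiff, Finset.mem_filter, hSl, hSr]
            tauto
          refine ⟨Sr, Finset.filter_subset _ S, hLP, c - P.x1, by linarith, by linarith, ?_⟩
          rw [eset]
          exact hrowl
  | hcut P S c h1 h2 hcross hB hT ihB ihT =>
    intro hSG hsub hx1 hx2 hy1 hy2 hWd hHt
    have hc_le : c ≤ N := le_of_lt (lt_of_lt_of_le h2 hy2)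
    have hcy1 : 0 ≤ c := le_trans hy1 (le_of_lt h1)
    set Sb := S.filter (fun i => (place i).y2 ≤ c) with hSb
    set St := S.filter (fun i => ¬ (place i).y2 ≤ c) with hSt
    have hSbG : Sb ⊆ G := (Finset.filter_subset _ S).trans hSG
    have hStG : St ⊆ G := (Finset.filter_subset _ S).trans hSG
    have hsubb : ∀ i ∈ Sb, (place i).SubRect ⟨P.x1, P.x2, P.y1, c⟩ := by
      intro i hi
      obtain ⟨q1, q2, q3, q4⟩ := hsub i (Finset.mem_of_mem_filter i hi)
      exact ⟨q1, q2, q3, (Finset.mem_filter.1 hi).2⟩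
    have hsubt : ∀ i ∈ St, (place i).SubRect ⟨P.x1, P.x2, c, P.y2⟩ := by
      intro i hi
      obtain ⟨q1, q2, q3, q4⟩ := hsub i (Finset.mem_of_mem_filter i hi)
      rcases hcross i (Finset.mem_of_mem_filter i hi) with hco | hco
      · exact absurd hco (Finset.mem_filter.1 hi).2
      · exact ⟨q1, q2, hco, q4⟩
    have hdisjoint_bt : Disjoint Sb St := Finset.disjoint_filter_filter_not S S _
    by_cases hA : (1 - ε / 2) * N < c - P.y1
    · obtain ⟨S1, hS1sub, hLP, u, hu0, hub, hrow⟩ :=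
        ihB hSbG hsubb hx1 hx2 hy1 hc_le hWd hA
      dsimp only at hub
      have hrowt : Row wd ht N (P.y2 - c) St := by
        exact rowPlain (Q := ⟨P.x1, P.x2, c, P.y2⟩) hT hsubt
          (fun i hi => hw i (hStG hi)) (fun i hi => hh i (hStG hi))
          (fun i hi => hposh i (hStG hi))
          (fun i hi j hj hne => hdisj i (hStG hi) j (hStG hj) hne)
          (by dsimp only; linarith) (by dsimp only; linarith)
      have hstack := hrow.stack hrowt
        (Finset.disjoint_of_subset_left (Finset.sdiff_subset) hdisjoint_bt)
        hu0 (by linarith)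
      have eset : S \ S1 = (Sb \ S1) ∪ St := by
        ext i
        simp only [Finset.mem_sdiff, Finset.mem_union, Finset.mem_filter, hSb, hSt]
        constructor
        · rintro ⟨hiS, hnS1⟩
          by_cases hxc : (place i).y2 ≤ c
          · exact Or.inl ⟨⟨hiS, hxc⟩, hnS1⟩
          · exact Or.inr ⟨hiS, hxc⟩
        · rintro (⟨⟨hiS, _⟩, hnS1⟩ | ⟨hiS, hxc⟩)
          · exact ⟨hiS, hnS1⟩
          · exact ⟨hiS, fun hiS1 => hxc (Finset.mem_filter.1 (hS1sub hiS1)).2⟩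
      refine ⟨S1, hS1sub.trans (Finset.filter_subset _ S), hLP,
        u + (P.y2 - c), by linarith, by linarith, ?_⟩
      rw [eset]
      exact hstack
    · by_cases hB' : (1 - ε / 2) * N < P.y2 - c
      · obtain ⟨S1, hS1sub, hLP, u, hu0, hub, hrow⟩ :=
          ihT hStG hsubt hx1 hx2 hcy1 hy2 hWd hB'
        dsimp only at hub
        have hrowb : Row wd ht N (c - P.y1) Sb := by
          exact rowPlain (Q := ⟨P.x1, P.x2, P.y1, c⟩) hB hsubb
            (fun i hi => hw i (hSbG hi)) (fun i hi => hh i (hSbG hi))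
            (fun i hi => hposh i (hSbG hi))
            (fun i hi j hj hne => hdisj i (hSbG hi) j (hSbG hj) hne)
            (by dsimp only; linarith) (by dsimp only; linarith)
        have hstack := hrow.stack hrowb
          (Finset.disjoint_of_subset_left (Finset.sdiff_subset) hdisjoint_bt.symm)
          hu0 (by linarith)
        have eset : S \ S1 = (St \ S1) ∪ Sb := by
          ext i
          simp only [Finset.mem_sdiff, Finset.mem_union, Finset.mem_filter, hSb, hSt]
          constructor
          · rintro ⟨hiS, hnS1⟩
            by_cases hxc : (place i).y2 ≤ c
            · exact Or.inr ⟨hiS, hxc⟩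
            · exact Or.inl ⟨⟨hiS, hxc⟩, hnS1⟩
          · rintro (⟨⟨hiS, _⟩, hnS1⟩ | ⟨hiS, hxc⟩)
            · exact ⟨hiS, hnS1⟩
            · exact ⟨hiS, fun hiS1 => (Finset.mem_filter.1 (hS1sub hiS1)).2 hxc⟩
        refine ⟨S1, hS1sub.trans (Finset.filter_subset _ S), hLP,
          u + (c - P.y1), by linarith, by linarith, ?_⟩
        rw [eset]
        exact hstack
      · by_cases hab : P.y2 - c ≤ c - P.y1
        · have hLP : LPack wd ht N ((1 - ε / 2) * N) Sb := by
            exact lpackPlain (Q := ⟨P.x1, P.x2, P.y1, c⟩) hB hsubb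
              (fun i hi => hw i (hSbG hi)) (fun i hi => hh i (hSbG hi))
              (fun i hi j hj hne => hdisj i (hSbG hi) j (hSbG hj) hne)
              (by dsimp only; linarith) (by dsimp only; linarith)
              (by dsimp only; linarith) (by dsimp only; linarith)
          have hrowt : Row wd ht N (P.y2 - c) St := by
            exact rowPlain (Q := ⟨P.x1, P.x2, c, P.y2⟩) hT hsubt
              (fun i hi => hw i (hStG hi)) (fun i hi => hh i (hStG hi))
              (fun i hi => hposh i (hStG hi))
              (fun i hi j hj hne => hdisj i (hStG hi) j (hStG hj) hne)
              (by dsimp only; linarith) (by dsimp only; linarith)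
          have eset : S \ Sb = St := by
            ext i
            simp only [Finset.mem_sdiff, Finset.mem_filter, hSb, hSt]
            tauto
          refine ⟨Sb, Finset.filter_subset _ S, hLP, P.y2 - c, by linarith, by linarith, ?_⟩
          rw [eset]
          exact hrowt
        · have hLP : LPack wd ht N ((1 - ε / 2) * N) St := by
            exact lpackPlain (Q := ⟨P.x1, P.x2, c, P.y2⟩) hT hsubt
              (fun i hi => hw i (hStG hi)) (fun i hi => hh i (hStG hi))
              (fun i hi j hj hne => hdisj i (hStG hi) j (hStG hj) hne)
              (by dsimp only; linarith) (by dsimp only; linarith)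
              (by dsimp only; linarith) (by dsimp only; linarith)
          have hrowb : Row wd ht N (c - P.y1) Sb := by
            exact rowPlain (Q := ⟨P.x1, P.x2, P.y1, c⟩) hB hsubb
              (fun i hi => hw i (hSbG hi)) (fun i hi => hh i (hSbG hi))
              (fun i hi => hposh i (hSbG hi))
              (fun i hi j hj hne => hdisj i (hSbG hi) j (hSbG hj) hne)
              (by dsimp only; linarith) (by dsimp only; linarith)
          have eset : S \ St = Sb := by
            ext i
            simp only [Finset.mem_sdiff, Finset.mem_filter, hSb, hSt]
            tauto
          refine ⟨St, Finset.filter_subset _ S, hLP, c - P.y1, by linarith, by linarith, ?_⟩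
          rw [eset]
          exact hrowb

end RC

set_option maxHeartbeats 1000000 in
/-- **Resource contraction.** If a set `M` of items contains no
massive item and admits a guillotine-separable packing into an `N × N` bin, and
90 degree rotations are allowed, then a subset of at least half the profit admits
a guillotine-separable packing into an `N × (1 - ε/2)N` bin (or a
`(1 - ε/2)N × N` bin). -/
theorem resource_contraction
    {ι : Type*} (N ε : ℝ) (hN : 0 < N) (hε : 0 < ε) (hε' : ε ≤ 1 / 10)
    (wd ht : ι → ℝ) (pr : ι → ℕ) (M : Finset ι) (place : ι → Rect)
    (hnomassive : ∀ m ∈ M, ¬ ((1 - ε) * N ≤ wd m ∧ (1 - ε) * N ≤ ht m))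
    (hpack : GuillotinePacking wd ht M place (knapsack N)) :
    ∃ M' ⊆ M,
      (∑ i ∈ M, (pr i : ℝ)) / 2 ≤ (∑ i ∈ M', (pr i : ℝ)) ∧
      ∃ place' : ι → Rect,
        (IsPackingRot wd ht M' place' ⟨0, N, 0, (1 - ε / 2) * N⟩ ∧
          GuillotineSep place' ⟨0, N, 0, (1 - ε / 2) * N⟩ M') ∨
        (IsPackingRot wd ht M' place' ⟨0, (1 - ε / 2) * N, 0, N⟩ ∧
          GuillotineSep place' ⟨0, (1 - ε / 2) * N, 0, N⟩ M') := by
    classical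
  obtain ⟨hIP, hGS⟩ := hpack
  have hβpos : 0 < (1 - ε / 2) * N := by nlinarith
  set G : Finset ι := M.filter (fun i => 0 < wd i ∧ 0 < ht i) with hG
  set D : Finset ι := M \ G with hD
  have hGsub : G ⊆ M := Finset.filter_subset _ M
  have hwN : ∀ i ∈ M, wd i ≤ N := by
    intro i hi
    obtain ⟨q1, q2, q3, q4⟩ := hIP.hin i hi
    have e := hIP.hw i hi
    rw [Rect.width] at e
    dsimp only [knapsack] at q1 q2
    linarith
  have hhN : ∀ i ∈ M, ht i ≤ N := by
    intro i hi
    obtain ⟨q1, q2, q3, q4⟩ := hIP.hin i hi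
    have e := hIP.hh i hi
    rw [Rect.height] at e
    dsimp only [knapsack] at q3 q4
    linarith
  have hmass : ∀ i ∈ M, wd i < (1 - ε) * N ∨ ht i < (1 - ε) * N := by
    intro i hi
    rcases not_and_or.1 (hnomassive i hi) with h | h
    · exact Or.inl (not_le.1 h)
    · exact Or.inr (not_le.1 h)
  obtain ⟨S1, hS1G, hLP, u, hu0, hub, hrow⟩ :=
    RC.key (wd := wd) (ht := ht) hN hε hε'
      (fun i hi => hIP.hw i (hGsub hi)) (fun i hi => hIP.hh i (hGsub hi))
      (fun i hi => (Finset.mem_filter.1 hi).2.1) (fun i hi => (Finset.mem_filter.1 hi).2.2)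
      (fun i hi j hj hne => hIP.hdisj i (hGsub hi) j (hGsub hj) hne)
      (fun i hi => hmass i (hGsub hi))
      (fun i hi => hwN i (hGsub hi)) (fun i hi => hhN i (hGsub hi))
      (knapsack N) G (hGS.anti G hGsub) (Finset.Subset.refl G) (fun i hi => hIP.hin i (hGsub hi))
      (le_refl 0) (le_refl N) (le_refl 0) (le_refl N)
      (by dsimp only [knapsack]; nlinarith) (by dsimp only [knapsack]; nlinarith)
  dsimp only [knapsack] at hub
  set S0 : Finset ι := G \ S1 with hS0
  have hu_lt : u < (1 - ε / 2) * N := by nlinarith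
  set c0 : ℝ := (u + (1 - ε / 2) * N) / 2 with hc0
  have hc0pos : 0 < c0 := by rw [hc0]; linarith
  have huc0 : u ≤ c0 := by rw [hc0]; linarith
  have hc0β : c0 < (1 - ε / 2) * N := by rw [hc0]; linarith
  obtain ⟨pl0, hP0, hG0, hs0⟩ := hrow.mono huc0
  have hDfacts : ∀ a ∈ D, (wd a ≤ 0 ∨ ht a ≤ 0) ∧ wd a ≤ N ∧ ht a ≤ N := by
    intro a ha
    rw [hD, Finset.mem_sdiff] at ha
    obtain ⟨haM, haG⟩ := ha
    refine ⟨?_, hwN a haM, hhN a haM⟩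
    have : ¬ (0 < wd a ∧ 0 < ht a) := fun hcon => haG (Finset.mem_filter.2 ⟨haM, hcon⟩)
    rcases not_and_or.1 this with h | h
    · exact Or.inl (not_lt.1 h)
    · exact Or.inr (not_lt.1 h)
  obtain ⟨pD, hDdims, hDprops, hDG⟩ := RC.degTower D hDfacts c0 ((1 - ε / 2) * N)
    hc0pos.le hc0β
  have hS0D : Disjoint S0 D := by
    refine Finset.disjoint_of_subset_left (Finset.sdiff_subset) ?_
    rw [hD]
    exact Finset.disjoint_sdiff
  set pl : ι → Rect := fun i => if i ∈ S0 then pl0 i else pD i with hpl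
  have hpl0 : ∀ i ∈ S0, pl i = pl0 i := fun i hi => by simp [hpl, hi]
  have hplD : ∀ i ∈ D, pl i = pD i := fun i hi => by
    simp [hpl, Finset.disjoint_right.1 hS0D hi]
  have hTin : ∀ i ∈ S0 ∪ D, (pl i).SubRect ⟨0, N, 0, (1 - ε / 2) * N⟩ := by
    intro i hi
    rcases Finset.mem_union.1 hi with hi | hi
    · rw [hpl0 i hi]
      obtain ⟨q1, q2, q3, q4⟩ := hP0.hin i hi
      dsimp only at q1 q2 q3 q4
      exact ⟨q1, q2, q3, by linarith⟩
    · rw [hplD i hi]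
      obtain ⟨q1, q2, q3, q4, q5⟩ := hDprops i hi
      exact ⟨by rw [q1], q2, by linarith, q4⟩
  have hTpack : IsPackingRot wd ht (S0 ∪ D) pl ⟨0, N, 0, (1 - ε / 2) * N⟩ := by
    refine ⟨?_, hTin, ?_⟩
    · intro i hi
      rcases Finset.mem_union.1 hi with hi | hi
      · rw [hpl0 i hi]; exact hP0.hdims i hi
      · rw [hplD i hi]; exact hDdims i hi
    · intro i hi j hj hne
      rcases Finset.mem_union.1 hj with hj | hj
      · rcases Finset.mem_union.1 hi with hi | hi
        · rw [hpl0 i hi, hpl0 j hj]; exact hP0.hdisj i hi j hj hne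
        · rw [hplD i hi]
          have : (pD i).toSet = ∅ := RC.toSet_empty (hDprops i hi).2.2.2.2
          rw [this]
          exact Set.empty_disjoint _
      · rw [hplD j hj]
        have : (pD j).toSet = ∅ := RC.toSet_empty (hDprops j hj).2.2.2.2
        rw [this]
        exact Set.disjoint_empty _
  have hTguil : GuillotineSep pl ⟨0, N, 0, (1 - ε / 2) * N⟩ (S0 ∪ D) := by
    have hbot : ∀ i ∈ S0, (pl i).y2 ≤ c0 := by
      intro i hi
      rw [hpl0 i hi]
      exact (hP0.hin i hi).2.2.2
    have htop : ∀ i ∈ D, ¬ (pl i).y2 ≤ c0 := by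
      intro i hi
      rw [hplD i hi]
      exact not_le.2 (hDprops i hi).2.2.1
    refine .hcut _ _ c0 hc0pos hc0β ?_ ?_ ?_
    · intro i hi
      rcases Finset.mem_union.1 hi with hi | hi
      · exact Or.inl (hbot i hi)
      · refine Or.inr ?_
        rw [hplD i hi]
        obtain ⟨_, _, q3, _, q5⟩ := hDprops i hi
        linarith
    · rw [RC.filter_union_left hbot htop]
      exact hG0.congr hpl0
    · rw [RC.filter_union_right hbot htop]
      exact hDG.congr hplD
  have e1 : ∑ i ∈ D, (pr i : ℝ) + ∑ i ∈ G, (pr i : ℝ) = ∑ i ∈ M, (pr i : ℝ) :=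
    Finset.sum_sdiff hGsub
  have e2 : ∑ i ∈ S0, (pr i : ℝ) + ∑ i ∈ S1, (pr i : ℝ) = ∑ i ∈ G, (pr i : ℝ) :=
    Finset.sum_sdiff hS1G
  have e3 : ∑ i ∈ S0 ∪ D, (pr i : ℝ) = ∑ i ∈ S0, (pr i : ℝ) + ∑ i ∈ D, (pr i : ℝ) :=
    Finset.sum_union hS0D
  by_cases hp : (∑ i ∈ M, (pr i : ℝ)) / 2 ≤ ∑ i ∈ S1, (pr i : ℝ)
  · obtain ⟨pl1, h1, h2⟩ := hLP
    exact ⟨S1, hS1G.trans hGsub, hp, pl1, Or.inl ⟨h1, h2⟩⟩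
  · refine ⟨S0 ∪ D, ?_, ?_, pl, Or.inl ⟨hTpack, hTguil⟩⟩
    · refine Finset.union_subset ((Finset.sdiff_subset).trans hGsub) ?_
      rw [hD]
      exact Finset.sdiff_subset
    · rw [e3]
      push_neg at hp
      linarith
end

section
/- Let k ∈ ℕ, N = 2^{k+1}, and let I be the set of 2k rectangles consisting, for each j ∈ {1,…,k}, of a vertical rectangle V_j of width 2^{j−1} and height N − (2^j − 1) and a horizontal rectangle H_j of height 2^{j−1} and width N − (2^{j−1} − 1). Then I admits a guillotine-separable packing into the N×N knapsack, and for every constant 0 < ε < 1/2 there is a constant c > 0 (independent of N) such that any s-stage packing of a subset I' ⊆ I satisfying |I| ≤ (2 − ε)·|I'| must have s ≥ c·ε·log N. -/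
/-- `StageSep place s d P S` : the items of `S` can be separated from the piece `P`
by a guillotine cutting sequence using at most `s` stages, where every stage consists
of parallel cuts only (vertical if the Boolean direction is `true`, horizontal
otherwise) and the first used stage has direction `d`; a subpiece containing at most
one item needs no further cuts (this accounts for the final trimming cut). -/
inductive StageSep {ι : Type*} (place : ι → Rect) : ℕ → Bool → Rect → Finset ι → Prop
  | base (s : ℕ) (d : Bool) (P : Rect) (S : Finset ι) (hS : S.card ≤ 1) :
      StageSep place s d P S
  | vcut (s : ℕ) (P : Rect) (S : Finset ι) (c : ℝ) (h1 : P.x1 < c) (h2 : c < P.x2)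
      (hcross : ∀ i ∈ S, (place i).x2 ≤ c ∨ c ≤ (place i).x1)
      (hL : StageSep place (s + 1) true ⟨P.x1, c, P.y1, P.y2⟩
              (S.filter fun i => (place i).x2 ≤ c))
      (hR : StageSep place (s + 1) true ⟨c, P.x2, P.y1, P.y2⟩
              (S.filter fun i => ¬ (place i).x2 ≤ c)) :
      StageSep place (s + 1) true P S
  | hcut (s : ℕ) (P : Rect) (S : Finset ι) (c : ℝ) (h1 : P.y1 < c) (h2 : c < P.y2)
      (hcross : ∀ i ∈ S, (place i).y2 ≤ c ∨ c ≤ (place i).y1)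
      (hB : StageSep place (s + 1) false ⟨P.x1, P.x2, P.y1, c⟩
              (S.filter fun i => (place i).y2 ≤ c))
      (hT : StageSep place (s + 1) false ⟨P.x1, P.x2, c, P.y2⟩
              (S.filter fun i => ¬ (place i).y2 ≤ c)) :
      StageSep place (s + 1) false P S
  | skip (s : ℕ) (d : Bool) (P : Rect) (S : Finset ι)
      (h : StageSep place s d P S) : StageSep place (s + 1) (!d) P S

/-- The placed items of `S` admit an (at most) `k`-stage guillotine cutting sequence
from the piece `P`. -/
def KStageSep {ι : Type*} (place : ι → Rect) (k : ℕ) (P : Rect) (S : Finset ι) : Prop :=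
  ∃ d : Bool, StageSep place k d P S

/-- The side length `N = 2^(k+1)` of the hard instance. -/
noncomputable def badN (k : ℕ) : ℝ := 2 ^ (k + 1)

/-- Widths of the hard instance: `Sum.inl j` is the vertical rectangle `V_(j+1)`
and `Sum.inr j` is the horizontal rectangle `H_(j+1)` of the paper. -/
noncomputable def badW (k : ℕ) : ℕ ⊕ ℕ → ℝ
  | Sum.inl j => 2 ^ j
  | Sum.inr j => badN k - (2 ^ j - 1)

/-- Heights of the hard instance. -/
noncomputable def badH (k : ℕ) : ℕ ⊕ ℕ → ℝ
  | Sum.inl j => badN k - (2 ^ (j + 1) - 1)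
  | Sum.inr j => 2 ^ j

/-- The `2k` items of the hard instance. -/
def badI (k : ℕ) : Finset (ℕ ⊕ ℕ) :=
  ((Finset.range k).image Sum.inl) ∪ ((Finset.range k).image Sum.inr)

namespace BadProof

open Finset

lemma tp_le {a b : ℕ} (h : a ≤ b) : (2:ℝ)^a ≤ 2^b := pow_le_pow_right₀ one_le_two h
lemma tp_lt {a b : ℕ} (h : a < b) : (2:ℝ)^a < 2^b := pow_lt_pow_right₀ one_lt_two h
lemma tp_lt_iff {a b : ℕ} : (2:ℝ)^a < 2^b ↔ a < b := pow_lt_pow_iff_right₀ one_lt_two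
lemma tp_le_iff {a b : ℕ} : (2:ℝ)^a ≤ 2^b ↔ a ≤ b := pow_le_pow_iff_right₀ one_lt_two
lemma one_le_tp (a : ℕ) : (1:ℝ) ≤ 2^a := one_le_pow₀ one_le_two

lemma mem_badI_inl {k a : ℕ} : Sum.inl a ∈ badI k ↔ a < k := by simp [badI]
lemma mem_badI_inr {k b : ℕ} : Sum.inr b ∈ badI k ↔ b < k := by simp [badI]

lemma disjX {r s : Rect} (h : r.x2 ≤ s.x1) : Disjoint r.toSet s.toSet := by
  rw [Set.disjoint_left]
  rintro p ⟨_, h2, _, _⟩ ⟨h3, _, _, _⟩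
  linarith

lemma disjY {r s : Rect} (h : r.y2 ≤ s.y1) : Disjoint r.toSet s.toSet := by
  rw [Set.disjoint_left]
  rintro p ⟨_, _, _, h2⟩ ⟨_, _, h3, _⟩
  linarith

/-- The spiral packing. -/
noncomputable def spiral (k : ℕ) : ℕ ⊕ ℕ → Rect
  | Sum.inl j => ⟨2^j - 1, 2^(j+1) - 1, 2^(j+1) - 1, badN k⟩
  | Sum.inr j => ⟨2^j - 1, badN k, 2^j - 1, 2^(j+1) - 1⟩

lemma spiral_packing (k : ℕ) :
    IsPacking (badW k) (badH k) (badI k) (spiral k) (knapsack (badN k)) := by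
  constructor
  · rintro (a | b) hi <;> simp [spiral, Rect.width, badW] <;> ring
  · rintro (a | b) hi <;> simp [spiral, Rect.height, badH] <;> ring
  · rintro (a | b) hi
    · rw [mem_badI_inl] at hi
      have h1 := one_le_tp a
      have h2 : (2:ℝ)^(a+1) ≤ 2^(k+1) := tp_le (by omega)
      have h3 := one_le_tp (a+1)
      refine ⟨?_, ?_, ?_, ?_⟩ <;> simp only [spiral, knapsack, badN] <;> linarith
    · rw [mem_badI_inr] at hi
      have h1 := one_le_tp b
      have h2 : (2:ℝ)^(b+1) ≤ 2^(k+1) := tp_le (by omega)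
      have h3 := one_le_tp (b+1)
      refine ⟨?_, ?_, ?_, ?_⟩ <;> simp only [spiral, knapsack, badN] <;> linarith
  · rintro (a | a) ha (b | b) hb hne
    · have hne' : a ≠ b := fun h => hne (by rw [h])
      rcases Nat.lt_or_ge a b with h | h
      · exact disjX (by simpa [spiral] using sub_le_sub_right (tp_le (by omega : a+1 ≤ b)) 1)
      · have hab : b < a := by omega
        exact (disjX (by simpa [spiral] using sub_le_sub_right (tp_le (by omega : b+1 ≤ a)) 1)).symm
    · rcases Nat.lt_or_ge a b with h | h
      · exact disjX (by simpa [spiral] using sub_le_sub_right (tp_le (by omega : a+1 ≤ b)) 1)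
      · exact (disjY (by simpa [spiral] using sub_le_sub_right (tp_le (by omega : b+1 ≤ a+1)) 1)).symm
    · rcases Nat.lt_or_ge b a with h | h
      · exact (disjX (by simpa [spiral] using sub_le_sub_right (tp_le (by omega : b+1 ≤ a)) 1)).symm
      · exact disjY (by simpa [spiral] using sub_le_sub_right (tp_le (by omega : a+1 ≤ b+1)) 1)
    · have hne' : a ≠ b := fun h => hne (by rw [h])
      rcases Nat.lt_or_ge a b with h | h
      · exact disjY (by simpa [spiral] using sub_le_sub_right (tp_le (by omega : a+1 ≤ b)) 1)
      · have hab : b < a := by omega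
        exact (disjY (by simpa [spiral] using sub_le_sub_right (tp_le (by omega : b+1 ≤ a)) 1)).symm

end BadProof
namespace BadProof

open Finset

/-- index of an item -/
def idx : ℕ ⊕ ℕ → ℕ := Sum.elim id id

attribute [reducible] idx

lemma sep_aux (k : ℕ) : ∀ m j, k ≤ j + m →
    GuillotineSep (spiral k) ⟨(2:ℝ)^j - 1, badN k, 2^j - 1, badN k⟩
      ((badI k).filter (fun i => j ≤ idx i)) := by
  intro m
  induction m with
  | zero =>
    intro j hj
    apply GuillotineSep.base
    have : (badI k).filter (fun i => j ≤ idx i) = ∅ := by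
      apply Finset.filter_eq_empty_iff.mpr
      rintro (a | b) hi <;>
        simp only [mem_badI_inl, mem_badI_inr] at hi <;> simp [idx] <;> omega
    rw [this]; simp
  | succ m ih =>
    intro j hj
    by_cases hjk : k ≤ j
    · apply GuillotineSep.base
      have : (badI k).filter (fun i => j ≤ idx i) = ∅ := by
        apply Finset.filter_eq_empty_iff.mpr
        rintro (a | b) hi <;>
          simp only [mem_badI_inl, mem_badI_inr] at hi <;> simp [idx] <;> omega
      rw [this]; simp
    · push_neg at hjk
      have hj1k : j + 1 ≤ k := hjk
      have hp1 : (2:ℝ)^j < 2^(j+1) := tp_lt (by omega)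
      have hp2 : (2:ℝ)^(j+1) ≤ 2^k := tp_le hj1k
      have hp3 : (2:ℝ)^k < 2^(k+1) := tp_lt (by omega)
      have h1tp := one_le_tp j
      -- horizontal cut at 2^(j+1) - 1
      apply GuillotineSep.hcut _ _ ((2:ℝ)^(j+1) - 1) (by simp; linarith)
        (by simp [badN]; linarith)
      · -- hcross
        rintro (a | b) hi <;>
          simp only [Finset.mem_filter, mem_badI_inl, mem_badI_inr, idx, Sum.elim_inl,
            Sum.elim_inr, id_eq] at hi
        · right
          simp only [spiral]
          exact sub_le_sub_right (tp_le (by omega)) 1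
        · rcases Nat.eq_or_lt_of_le hi.2 with h | h
          · left; simp only [spiral]; exact sub_le_sub_right (tp_le (by omega)) 1
          · right; simp only [spiral]; exact sub_le_sub_right (tp_le (by omega)) 1
      · -- bottom piece: contains exactly H_j
        have hbot : ((badI k).filter (fun i => j ≤ idx i)).filter
            (fun i => (spiral k i).y2 ≤ (2:ℝ)^(j+1) - 1) = {Sum.inr j} := by
          ext (a | b) <;>
            simp only [Finset.mem_filter, mem_badI_inl, mem_badI_inr, idx, Sum.elim_inl,
              Sum.elim_inr, id_eq, spiral, Finset.mem_singleton, badN]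
          · constructor
            · rintro ⟨⟨hak, hja⟩, hle⟩
              exfalso
              have : (2:ℝ)^(j+1) ≤ 2^(k+1) := tp_le (by omega)
              linarith
            · rintro ⟨⟩
          · constructor
            · rintro ⟨⟨hbk, hjb⟩, hle⟩
              have : b + 1 ≤ j + 1 := tp_le_iff.mp (by linarith)
              simp; omega
            · rintro h
              injection h with h
              subst h
              exact ⟨⟨hjk, le_refl _⟩, le_refl _⟩
        rw [hbot]
        exact GuillotineSep.base _ _ (by simp)
      · -- top piece
        have htop : ((badI k).filter (fun i => j ≤ idx i)).filter
            (fun i => ¬ (spiral k i).y2 ≤ (2:ℝ)^(j+1) - 1) =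
            (badI k).filter (fun i => j + (if i.isLeft then 0 else 1) ≤ idx i) := by
          ext (a | b) <;>
            simp only [Finset.mem_filter, mem_badI_inl, mem_badI_inr, idx, Sum.isLeft_inl,
              Bool.false_eq_true, Sum.isLeft_inr, if_true, if_false, Sum.elim_inl,
              Sum.elim_inr, id_eq, spiral, badN, not_le]
          · constructor
            · rintro ⟨⟨hak, hja⟩, _⟩; exact ⟨hak, hja⟩
            · rintro ⟨hak, hja⟩
              refine ⟨⟨hak, hja⟩, ?_⟩
              have : (2:ℝ)^(j+1) ≤ 2^(k+1) := tp_le (by omega)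
              linarith
          · constructor
            · rintro ⟨⟨hbk, hjb⟩, hlt⟩
              have : j + 1 < b + 1 := tp_lt_iff.mp (by linarith)
              exact ⟨hbk, by omega⟩
            · rintro ⟨hbk, hjb⟩
              exact ⟨⟨hbk, by omega⟩, by have := tp_lt (by omega : j+1 < b+1); linarith⟩
        rw [htop]
        -- vertical cut at 2^(j+1) - 1
        apply GuillotineSep.vcut _ _ ((2:ℝ)^(j+1) - 1) (by simp; linarith)
          (by simp [badN]; linarith)
        · rintro (a | b) hi <;>
            simp only [Finset.mem_filter, mem_badI_inl, mem_badI_inr, Sum.isLeft_inl, Bool.false_eq_true,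
              Sum.isLeft_inr, if_true, if_false, idx, Sum.elim_inl, Sum.elim_inr, id_eq] at hi
          · rcases Nat.eq_or_lt_of_le hi.2 with h | h
            · left; simp only [spiral]; exact sub_le_sub_right (tp_le (by omega)) 1
            · right; simp only [spiral]; exact sub_le_sub_right (tp_le (by omega)) 1
          · right; simp only [spiral]; exact sub_le_sub_right (tp_le (by omega)) 1
        · -- left piece: exactly V_j
          have hleft : ((badI k).filter (fun i => j + (if i.isLeft then 0 else 1) ≤ idx i)).filter
              (fun i => (spiral k i).x2 ≤ (2:ℝ)^(j+1) - 1) = {Sum.inl j} := by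
            ext (a | b) <;>
              simp only [Finset.mem_filter, mem_badI_inl, mem_badI_inr, Sum.isLeft_inl, Bool.false_eq_true,
                Sum.isLeft_inr, if_true, if_false, idx, Sum.elim_inl, Sum.elim_inr, id_eq, spiral, Finset.mem_singleton, badN]
            · constructor
              · rintro ⟨⟨hak, hja⟩, hle⟩
                have : a + 1 ≤ j + 1 := tp_le_iff.mp (by linarith)
                simp; omega
              · rintro h
                injection h with h
                subst h
                exact ⟨⟨hjk, le_refl _⟩, le_refl _⟩
            · constructor
              · rintro ⟨⟨hbk, hjb⟩, hle⟩
                exfalso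
                have : (2:ℝ)^(j+1) ≤ 2^(k+1) := tp_le (by omega)
                linarith
              · rintro ⟨⟩
          rw [hleft]
          exact GuillotineSep.base _ _ (by simp)
        · -- right piece: recurse
          have hright : ((badI k).filter (fun i => j + (if i.isLeft then 0 else 1) ≤ idx i)).filter
              (fun i => ¬ (spiral k i).x2 ≤ (2:ℝ)^(j+1) - 1) =
              (badI k).filter (fun i => j + 1 ≤ idx i) := by
            ext (a | b) <;>
              simp only [Finset.mem_filter, mem_badI_inl, mem_badI_inr, Sum.isLeft_inl, Bool.false_eq_true,
                Sum.isLeft_inr, if_true, if_false, idx, Sum.elim_inl, Sum.elim_inr, id_eq, spiral, badN, not_le, idx, id_eq]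
            · constructor
              · rintro ⟨⟨hak, hja⟩, hlt⟩
                have : j + 1 < a + 1 := tp_lt_iff.mp (by linarith)
                exact ⟨hak, by omega⟩
              · rintro ⟨hak, hja⟩
                exact ⟨⟨hak, by omega⟩, by have := tp_lt (by omega : j+1 < a+1); linarith⟩
            · constructor
              · rintro ⟨⟨hbk, hjb⟩, _⟩; exact ⟨hbk, hjb⟩
              · rintro ⟨hbk, hjb⟩
                refine ⟨⟨hbk, hjb⟩, ?_⟩
                have : (2:ℝ)^(j+1) ≤ 2^(k+1) := tp_le (by omega)
                linarith
          rw [hright]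
          exact ih (j+1) (by omega)

lemma spiral_sep (k : ℕ) : GuillotineSep (spiral k) (knapsack (badN k)) (badI k) := by
  have h := sep_aux k k 0 (by omega)
  have e1 : ((2:ℝ)^0 - 1) = 0 := by norm_num
  have e2 : (badI k).filter (fun i => 0 ≤ idx i) = badI k := by
    apply Finset.filter_true_of_mem; intro i _; omega
  rw [e1, e2] at h
  exact h

end BadProof
namespace BadProof

open Finset

/-- Chains: alternating sequences of H-items (`true` = next is an `inr`) and
V-items, with the index pattern `b₁ ≤ a₁ < b₂ ≤ a₂ < ⋯`. -/
def hasChain (S : Finset (ℕ ⊕ ℕ)) : Bool → ℕ → ℕ → Prop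
  | _, 0, _ => True
  | true, n+1, l => ∃ b, l ≤ b ∧ Sum.inr b ∈ S ∧ hasChain S false n b
  | false, n+1, l => ∃ a, l ≤ a ∧ Sum.inl a ∈ S ∧ hasChain S true n (a+1)

lemma hasChain_true_succ {S : Finset (ℕ ⊕ ℕ)} {n l : ℕ} :
    hasChain S true (n+1) l ↔ ∃ b, l ≤ b ∧ Sum.inr b ∈ S ∧ hasChain S false n b := Iff.rfl

lemma hasChain_false_succ {S : Finset (ℕ ⊕ ℕ)} {n l : ℕ} :
    hasChain S false (n+1) l ↔ ∃ a, l ≤ a ∧ Sum.inl a ∈ S ∧ hasChain S true n (a+1) := Iff.rfl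

lemma hasChain_zero {S : Finset (ℕ ⊕ ℕ)} {d : Bool} {l : ℕ} : hasChain S d 0 l := by
  cases d <;> trivial

lemma hasChain_mono {S S' : Finset (ℕ ⊕ ℕ)} (hss : S ⊆ S') :
    ∀ (n : ℕ) (d : Bool) (l : ℕ), hasChain S d n l → hasChain S' d n l := by
  intro n
  induction n with
  | zero => intro d l _; exact hasChain_zero
  | succ n ih =>
    intro d l hc
    cases d
    · obtain ⟨a, h1, h2, h3⟩ := hc
      exact ⟨a, h1, hss h2, ih _ _ h3⟩
    · obtain ⟨b, h1, h2, h3⟩ := hc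
      exact ⟨b, h1, hss h2, ih _ _ h3⟩

lemma hasChain_two {S : Finset (ℕ ⊕ ℕ)} {d : Bool} {m l : ℕ}
    (hc : hasChain S d (m+2) l) : ∃ a b, Sum.inl a ∈ S ∧ Sum.inr b ∈ S := by
  cases d
  · obtain ⟨a, _, ha, b, _, hb, _⟩ := hc
    exact ⟨a, b, ha, hb⟩
  · obtain ⟨b, _, hb, a, _, ha, _⟩ := hc
    exact ⟨a, b, ha, hb⟩

lemma chain_stay_true {S : Finset (ℕ ⊕ ℕ)} (q : ℕ ⊕ ℕ → Prop) [DecidablePred q]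
    (hB : ∀ b, Sum.inr b ∈ S → q (Sum.inr b))
    (hA : ∀ a b, Sum.inl a ∈ S → Sum.inr b ∈ S → b ≤ a → q (Sum.inl a)) :
    ∀ n : ℕ, (∀ l, hasChain S true n l → hasChain (S.filter q) true n l) ∧
      (∀ b, Sum.inr b ∈ S → hasChain S false n b → hasChain (S.filter q) false n b) := by
  intro n
  induction n with
  | zero => exact ⟨fun _ _ => hasChain_zero, fun _ _ _ => hasChain_zero⟩
  | succ n ih =>
    constructor
    · rintro l ⟨b, hlb, hbS, tail⟩
      exact ⟨b, hlb, Finset.mem_filter.mpr ⟨hbS, hB b hbS⟩, ih.2 b hbS tail⟩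
    · rintro b hbS ⟨a, hba, haS, tail⟩
      exact ⟨a, hba, Finset.mem_filter.mpr ⟨haS, hA a b haS hbS hba⟩, ih.1 (a+1) tail⟩

lemma chain_stay_false {S : Finset (ℕ ⊕ ℕ)} (q : ℕ ⊕ ℕ → Prop) [DecidablePred q]
    (hA : ∀ a, Sum.inl a ∈ S → q (Sum.inl a))
    (hB : ∀ a b, Sum.inl a ∈ S → Sum.inr b ∈ S → a < b → q (Sum.inr b)) :
    ∀ n : ℕ, (∀ l, hasChain S false n l → hasChain (S.filter q) false n l) ∧
      (∀ a, Sum.inl a ∈ S → hasChain S true n (a+1) → hasChain (S.filter q) true n (a+1)) := by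
  intro n
  induction n with
  | zero => exact ⟨fun _ _ => hasChain_zero, fun _ _ _ => hasChain_zero⟩
  | succ n ih =>
    constructor
    · rintro l ⟨a, hla, haS, tail⟩
      exact ⟨a, hla, Finset.mem_filter.mpr ⟨haS, hA a haS⟩, ih.2 a haS tail⟩
    · rintro a haS ⟨b, hab, hbS, tail⟩
      exact ⟨b, hab, Finset.mem_filter.mpr ⟨hbS, hB a b haS hbS (by omega)⟩, ih.1 b tail⟩

/-- The twin chain: if both items of every index of `T` are present,
there is a chain of length `2|T|`. -/
lemma twin_chain {S : Finset (ℕ ⊕ ℕ)} :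
    ∀ (m : ℕ) (T : Finset ℕ) (l : ℕ), T.card = m → (∀ t ∈ T, l ≤ t) →
      (∀ t ∈ T, Sum.inl t ∈ S ∧ Sum.inr t ∈ S) → hasChain S true (2*m) l := by
  intro m
  induction m with
  | zero => intro T l _ _ _; exact hasChain_zero
  | succ m ih =>
    intro T l hcard hl hT
    have hne : T.Nonempty := by rw [← Finset.card_pos, hcard]; omega
    set t := T.min' hne with ht
    have htT : t ∈ T := T.min'_mem hne
    have e : 2*(m+1) = (2*m) + 1 + 1 := by ring
    rw [e]
    refine ⟨t, hl t htT, (hT t htT).2, t, le_refl t, (hT t htT).1, ?_⟩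
    apply ih (T.erase t) (t+1)
    · rw [Finset.card_erase_of_mem htT, hcard]; omega
    · intro t' ht'
      have h1 := Finset.ne_of_mem_erase ht'
      have h2 := T.min'_le t' (Finset.mem_of_mem_erase ht')
      omega
    · intro t' ht'
      exact hT t' (Finset.mem_of_mem_erase ht')

/-- Facts about the dimensions of placed items of the hard instance. -/
def ItemFact (k : ℕ) (place : ℕ ⊕ ℕ → Rect) : ℕ ⊕ ℕ → Prop
  | Sum.inl a => a < k ∧ (place (Sum.inl a)).width = 2^a ∧
      (place (Sum.inl a)).height = badN k - (2^(a+1) - 1)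
  | Sum.inr b => b < k ∧ (place (Sum.inr b)).width = badN k - (2^b - 1) ∧
      (place (Sum.inr b)).height = 2^b

lemma cutW {P r r' : Rect} {c : ℝ} (hr : r.SubRect P) (hr' : r'.SubRect P)
    (h1 : r.x2 ≤ c) (h2 : c ≤ r'.x1) : r.width + r'.width ≤ P.x2 - P.x1 := by
  obtain ⟨a1, a2, a3, a4⟩ := hr
  obtain ⟨b1, b2, b3, b4⟩ := hr'
  simp only [Rect.width]
  linarith

lemma cutH {P r r' : Rect} {c : ℝ} (hr : r.SubRect P) (hr' : r'.SubRect P)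
    (h1 : r.y2 ≤ c) (h2 : c ≤ r'.y1) : r.height + r'.height ≤ P.y2 - P.y1 := by
  obtain ⟨a1, a2, a3, a4⟩ := hr
  obtain ⟨b1, b2, b3, b4⟩ := hr'
  simp only [Rect.height]
  linarith

end BadProof
namespace BadProof

open Finset

lemma main_bound {k : ℕ} (hk : 1 ≤ k) (place : ℕ ⊕ ℕ → Rect) :
    ∀ {s : ℕ} {d : Bool} {P : Rect} {S : Finset (ℕ ⊕ ℕ)}, StageSep place s d P S →
      (∀ i ∈ S, ItemFact k place i) →
      (∀ i ∈ S, (place i).SubRect P) →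
      P.x2 - P.x1 ≤ badN k → P.y2 - P.y1 ≤ badN k →
      ∀ n l, hasChain S d n l → n ≤ s + 1 := by
  have hNk : (2:ℝ)^k + 2^k = badN k := by rw [badN, pow_succ]; ring
  have e4 := one_le_tp k
  intro s d P S h
  induction h with
  | base s d P S hS =>
    intro hfact hin hW hH n l hc
    rcases n with _ | _ | m
    · omega
    · omega
    · exfalso
      obtain ⟨a, b, ha, hb⟩ := hasChain_two hc
      have hss : ({Sum.inl a, Sum.inr b} : Finset (ℕ ⊕ ℕ)) ⊆ S := by
        intro x hx
        rcases Finset.mem_insert.mp hx with rfl | hx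
        · exact ha
        · rw [Finset.mem_singleton.mp hx]; exact hb
      have h2 := Finset.card_le_card hss
      rw [Finset.card_pair (by simp)] at h2
      omega
  | vcut s P S c h1 h2 hcross hL hR ihL ihR =>
    intro hfact hin hW hH n l hc
    rcases n with _ | n
    · omega
    have keyRR : ∀ b b', Sum.inr b ∈ S → Sum.inr b' ∈ S →
        (place (Sum.inr b)).x2 ≤ c → c ≤ (place (Sum.inr b')).x1 → False := by
      intro b b' hb hb' hx hx'
      have hsum := le_trans (cutW (hin _ hb) (hin _ hb') hx hx') hW
      obtain ⟨hbk, hbw, -⟩ := hfact _ hb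
      obtain ⟨hb'k, hb'w, -⟩ := hfact _ hb'
      rw [hbw, hb'w] at hsum
      have e1 : (2:ℝ)^b ≤ 2^(k-1) := tp_le (by omega)
      have e2 : (2:ℝ)^b' ≤ 2^(k-1) := tp_le (by omega)
      have e3 : (2:ℝ)^(k-1) + 2^(k-1) = 2^k := by
        have hkk : (2:ℝ)^k = 2^(k-1) * 2 := by rw [← pow_succ]; congr 1; omega
        rw [hkk]; ring
      linarith
    have keyLR1 : ∀ a b, Sum.inl a ∈ S → Sum.inr b ∈ S → b ≤ a →
        (place (Sum.inl a)).x2 ≤ c → c ≤ (place (Sum.inr b)).x1 → False := by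
      intro a b haS hbS hba hx hx'
      have hsum := le_trans (cutW (hin _ haS) (hin _ hbS) hx hx') hW
      obtain ⟨hak, haw, -⟩ := hfact _ haS
      obtain ⟨hbk, hbw, -⟩ := hfact _ hbS
      rw [haw, hbw] at hsum
      have e1 : (2:ℝ)^b ≤ 2^a := tp_le hba
      have e2 := one_le_tp b
      linarith
    have keyLR2 : ∀ a b, Sum.inl a ∈ S → Sum.inr b ∈ S → b ≤ a →
        (place (Sum.inr b)).x2 ≤ c → c ≤ (place (Sum.inl a)).x1 → False := by
      intro a b haS hbS hba hx hx'
      have hsum := le_trans (cutW (hin _ hbS) (hin _ haS) hx hx') hW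
      obtain ⟨hak, haw, -⟩ := hfact _ haS
      obtain ⟨hbk, hbw, -⟩ := hfact _ hbS
      rw [haw, hbw] at hsum
      have e1 : (2:ℝ)^b ≤ 2^a := tp_le hba
      have e2 := one_le_tp b
      linarith
    obtain ⟨b0, hlb0, hb0S, -⟩ := id hc
    by_cases hside : (place (Sum.inr b0)).x2 ≤ c
    · have hB : ∀ b, Sum.inr b ∈ S → (place (Sum.inr b)).x2 ≤ c := by
        intro b hb
        by_contra hbc
        rcases hcross _ hb with h | h
        · exact hbc h
        · exact keyRR _ _ hb0S hb hside h
      have hA : ∀ a b, Sum.inl a ∈ S → Sum.inr b ∈ S → b ≤ a →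
          (place (Sum.inl a)).x2 ≤ c := by
        intro a b haS hbS hba
        by_contra hac
        rcases hcross _ haS with h | h
        · exact hac h
        · exact keyLR2 a b haS hbS hba (hB b hbS) h
      have hchain := (chain_stay_true (fun i => (place i).x2 ≤ c) hB hA (n+1)).1 l hc
      refine ihL ?_ ?_ ?_ ?_ (n+1) l hchain
      · intro i hi; exact hfact i (Finset.mem_of_mem_filter i hi)
      · intro i hi
        obtain ⟨hiS, hix⟩ := Finset.mem_filter.mp hi
        obtain ⟨f1, f2, f3, f4⟩ := hin i hiS
        exact ⟨f1, hix, f3, f4⟩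
      · show c - P.x1 ≤ badN k
        linarith
      · show P.y2 - P.y1 ≤ badN k
        exact hH
    · have hB : ∀ b, Sum.inr b ∈ S → ¬ (place (Sum.inr b)).x2 ≤ c := by
        intro b hb hbc
        rcases hcross _ hb0S with h | h
        · exact hside h
        · exact keyRR _ _ hb hb0S hbc h
      have hA : ∀ a b, Sum.inl a ∈ S → Sum.inr b ∈ S → b ≤ a →
          ¬ (place (Sum.inl a)).x2 ≤ c := by
        intro a b haS hbS hba hac
        rcases hcross _ hbS with h | h
        · exact hB b hbS h
        · exact keyLR1 a b haS hbS hba hac h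
      have hchain := (chain_stay_true (fun i => ¬ (place i).x2 ≤ c) hB hA (n+1)).1 l hc
      refine ihR ?_ ?_ ?_ ?_ (n+1) l hchain
      · intro i hi; exact hfact i (Finset.mem_of_mem_filter i hi)
      · intro i hi
        obtain ⟨hiS, hix⟩ := Finset.mem_filter.mp hi
        obtain ⟨f1, f2, f3, f4⟩ := hin i hiS
        have hcx : c ≤ (place i).x1 := by
          rcases hcross _ hiS with h | h
          · exact absurd h hix
          · exact h
        exact ⟨hcx, f2, f3, f4⟩
      · show P.x2 - c ≤ badN k
        linarith
      · show P.y2 - P.y1 ≤ badN k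
        exact hH
  | hcut s P S c h1 h2 hcross hB' hT' ihB ihT =>
    intro hfact hin hW hH n l hc
    rcases n with _ | n
    · omega
    have keyLL : ∀ a a', Sum.inl a ∈ S → Sum.inl a' ∈ S →
        (place (Sum.inl a)).y2 ≤ c → c ≤ (place (Sum.inl a')).y1 → False := by
      intro a a' ha ha' hy hy'
      have hsum := le_trans (cutH (hin _ ha) (hin _ ha') hy hy') hH
      obtain ⟨hak, -, hah⟩ := hfact _ ha
      obtain ⟨ha'k, -, ha'h⟩ := hfact _ ha'
      rw [hah, ha'h] at hsum
      have e1 : (2:ℝ)^(a+1) ≤ 2^k := tp_le (by omega)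
      have e2 : (2:ℝ)^(a'+1) ≤ 2^k := tp_le (by omega)
      linarith
    have keyLR1 : ∀ a b, Sum.inl a ∈ S → Sum.inr b ∈ S → a < b →
        (place (Sum.inl a)).y2 ≤ c → c ≤ (place (Sum.inr b)).y1 → False := by
      intro a b haS hbS hab hy hy'
      have hsum := le_trans (cutH (hin _ haS) (hin _ hbS) hy hy') hH
      obtain ⟨hak, -, hah⟩ := hfact _ haS
      obtain ⟨hbk, -, hbh⟩ := hfact _ hbS
      rw [hah, hbh] at hsum
      have e1 : (2:ℝ)^(a+1) ≤ 2^b := tp_le (by omega)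
      have e2 := one_le_tp (a+1)
      linarith
    have keyLR2 : ∀ a b, Sum.inl a ∈ S → Sum.inr b ∈ S → a < b →
        (place (Sum.inr b)).y2 ≤ c → c ≤ (place (Sum.inl a)).y1 → False := by
      intro a b haS hbS hab hy hy'
      have hsum := le_trans (cutH (hin _ hbS) (hin _ haS) hy hy') hH
      obtain ⟨hak, -, hah⟩ := hfact _ haS
      obtain ⟨hbk, -, hbh⟩ := hfact _ hbS
      rw [hah, hbh] at hsum
      have e1 : (2:ℝ)^(a+1) ≤ 2^b := tp_le (by omega)
      have e2 := one_le_tp (a+1)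
      linarith
    obtain ⟨a0, hla0, ha0S, -⟩ := id hc
    by_cases hside : (place (Sum.inl a0)).y2 ≤ c
    · have hA : ∀ a, Sum.inl a ∈ S → (place (Sum.inl a)).y2 ≤ c := by
        intro a ha
        by_contra hac
        rcases hcross _ ha with h | h
        · exact hac h
        · exact keyLL _ _ ha0S ha hside h
      have hB : ∀ a b, Sum.inl a ∈ S → Sum.inr b ∈ S → a < b →
          (place (Sum.inr b)).y2 ≤ c := by
        intro a b haS hbS hab
        by_contra hbc
        rcases hcross _ hbS with h | h
        · exact hbc h
        · exact keyLR1 a b haS hbS hab (hA a haS) h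
      have hchain := (chain_stay_false (fun i => (place i).y2 ≤ c) hA hB (n+1)).1 l hc
      refine ihB ?_ ?_ ?_ ?_ (n+1) l hchain
      · intro i hi; exact hfact i (Finset.mem_of_mem_filter i hi)
      · intro i hi
        obtain ⟨hiS, hiy⟩ := Finset.mem_filter.mp hi
        obtain ⟨f1, f2, f3, f4⟩ := hin i hiS
        exact ⟨f1, f2, f3, hiy⟩
      · show P.x2 - P.x1 ≤ badN k
        exact hW
      · show c - P.y1 ≤ badN k
        linarith
    · have hA : ∀ a, Sum.inl a ∈ S → ¬ (place (Sum.inl a)).y2 ≤ c := by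
        intro a ha hac
        rcases hcross _ ha0S with h | h
        · exact hside h
        · exact keyLL _ _ ha ha0S hac h
      have hB : ∀ a b, Sum.inl a ∈ S → Sum.inr b ∈ S → a < b →
          ¬ (place (Sum.inr b)).y2 ≤ c := by
        intro a b haS hbS hab hbc
        rcases hcross _ haS with h | h
        · exact hA a haS h
        · exact keyLR2 a b haS hbS hab hbc h
      have hchain := (chain_stay_false (fun i => ¬ (place i).y2 ≤ c) hA hB (n+1)).1 l hc
      refine ihT ?_ ?_ ?_ ?_ (n+1) l hchain
      · intro i hi; exact hfact i (Finset.mem_of_mem_filter i hi)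
      · intro i hi
        obtain ⟨hiS, hiy⟩ := Finset.mem_filter.mp hi
        obtain ⟨f1, f2, f3, f4⟩ := hin i hiS
        have hcy : c ≤ (place i).y1 := by
          rcases hcross _ hiS with h | h
          · exact absurd h hiy
          · exact h
        exact ⟨f1, f2, hcy, f4⟩
      · show P.x2 - P.x1 ≤ badN k
        exact hW
      · show P.y2 - c ≤ badN k
        linarith
  | skip s d P S h ih =>
    intro hfact hin hW hH n l hc
    rcases n with _ | n
    · omega
    cases d
    · obtain ⟨b, hlb, hbS, tail⟩ := hc
      have := ih hfact hin hW hH n b tail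
      omega
    · obtain ⟨a, hla, haS, tail⟩ := hc
      have := ih hfact hin hW hH n (a+1) tail
      omega

end BadProof
namespace BadProof

open Finset

lemma stage_zero {ι : Type*} {place : ι → Rect} {d : Bool} {P : Rect} {S : Finset ι}
    (h : StageSep place 0 d P S) : S.card ≤ 1 := by
  cases h with
  | base _ _ _ _ hS => exact hS

lemma card_badI (k : ℕ) : (badI k).card = 2 * k := by
  have hdisj : Disjoint ((Finset.range k).image Sum.inl) ((Finset.range k).image Sum.inr) := by
    simp [Finset.disjoint_left]
  rw [badI, Finset.card_union_of_disjoint hdisj,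
    Finset.card_image_of_injective _ Sum.inl_injective,
    Finset.card_image_of_injective _ Sum.inr_injective, Finset.card_range]
  ring

end BadProof

theorem stage_lower_bound' :
    (∀ k : ℕ, 1 ≤ k →
      ∃ place, GuillotinePacking (badW k) (badH k) (badI k) place (knapsack (badN k))) ∧
    (∀ ε : ℝ, 0 < ε → ε < 1 / 2 →
      ∃ c : ℝ, 0 < c ∧
        ∀ k : ℕ, 1 ≤ k →
          ∀ I' ⊆ badI k, ∀ (s : ℕ) (place : ℕ ⊕ ℕ → Rect),
            IsPacking (badW k) (badH k) I' place (knapsack (badN k)) →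
            KStageSep place s (knapsack (badN k)) I' →
            ((badI k).card : ℝ) ≤ (2 - ε) * (I'.card : ℝ) →
            c * ε * Real.log (badN k) ≤ (s : ℝ)) := by
  constructor
  · intro k _
    exact ⟨BadProof.spiral k, BadProof.spiral_packing k, BadProof.spiral_sep k⟩
  · intro ε hε0 hεhalf
    refine ⟨1/4, by norm_num, ?_⟩
    intro k hk I' hsub s place hpack hstage hratio
    classical
    have hkR : (1:ℝ) ≤ (k:ℝ) := by exact_mod_cast hk
    set A := (Finset.range k).filter (fun a => Sum.inl a ∈ I') with hA
    set B := (Finset.range k).filter (fun b => Sum.inr b ∈ I') with hB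
    have hIdecomp : I' = A.image Sum.inl ∪ B.image Sum.inr := by
      ext i
      constructor
      · intro hi
        have hbi := hsub hi
        rcases i with a | b
        · rw [BadProof.mem_badI_inl] at hbi
          exact Finset.mem_union_left _
            (Finset.mem_image_of_mem _ (Finset.mem_filter.mpr ⟨Finset.mem_range.mpr hbi, hi⟩))
        · rw [BadProof.mem_badI_inr] at hbi
          exact Finset.mem_union_right _
            (Finset.mem_image_of_mem _ (Finset.mem_filter.mpr ⟨Finset.mem_range.mpr hbi, hi⟩))
      · intro hi
        rcases Finset.mem_union.mp hi with h | h
        · obtain ⟨a, ha, rfl⟩ := Finset.mem_image.mp h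
          exact (Finset.mem_filter.mp ha).2
        · obtain ⟨b, hb, rfl⟩ := Finset.mem_image.mp h
          exact (Finset.mem_filter.mp hb).2
    have hcardI' : I'.card = A.card + B.card := by
      rw [hIdecomp, Finset.card_union_of_disjoint (by simp [Finset.disjoint_left]),
        Finset.card_image_of_injective _ Sum.inl_injective,
        Finset.card_image_of_injective _ Sum.inr_injective]
    set T := A ∩ B with hT
    set m := T.card with hm
    have hunion : (A ∪ B).card ≤ k :=
      le_trans (Finset.card_le_card (Finset.union_subset (Finset.filter_subset _ _)
        (Finset.filter_subset _ _))) (le_of_eq (Finset.card_range k))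
    have hcardTU : T.card + (A ∪ B).card = A.card + B.card :=
      Finset.card_inter_add_card_union A B
    have hTI : ∀ t ∈ T, Sum.inl t ∈ I' ∧ Sum.inr t ∈ I' := by
      intro t ht
      obtain ⟨h1, h2⟩ := Finset.mem_inter.mp ht
      exact ⟨(Finset.mem_filter.mp h1).2, (Finset.mem_filter.mp h2).2⟩
    have hchain : BadProof.hasChain I' true (2*m) 0 :=
      BadProof.twin_chain m T 0 rfl (fun t _ => Nat.zero_le t) hTI
    have hfact : ∀ i ∈ I', BadProof.ItemFact k place i := by
      intro i hi
      have hbi := hsub hi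
      have hw := hpack.hw i hi
      have hh := hpack.hh i hi
      rcases i with a | b
      · rw [BadProof.mem_badI_inl] at hbi
        exact ⟨hbi, hw, hh⟩
      · rw [BadProof.mem_badI_inr] at hbi
        exact ⟨hbi, hw, hh⟩
    have hWk : (knapsack (badN k)).x2 - (knapsack (badN k)).x1 ≤ badN k := by
      simp [knapsack]
    have hHk : (knapsack (badN k)).y2 - (knapsack (badN k)).y1 ≤ badN k := by
      simp [knapsack]
    obtain ⟨d, hd⟩ := hstage
    have h2m : 2*m ≤ s + 2 := by
      cases d
      · have hd' : StageSep place (s+1) true (knapsack (badN k)) I' := by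
          have := StageSep.skip s false _ _ hd
          simpa using this
        have := BadProof.main_bound hk place hd' hfact hpack.hin hWk hHk (2*m) 0 hchain
        omega
      · have := BadProof.main_bound hk place hd hfact hpack.hin hWk hHk (2*m) 0 hchain
        omega
    -- numeric part
    have hcardbad : ((badI k).card : ℝ) = 2 * k := by
      rw [BadProof.card_badI]; push_cast; ring
    rw [hcardbad] at hratio
    have hε2' : (0:ℝ) < 2 - ε := by linarith
    have hεk : (0:ℝ) < ε * k := mul_pos hε0 (by linarith)
    have hmR : ((I'.card:ℝ) - k) ≤ (m:ℝ) := by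
      have h1 : (m:ℝ) + ((A∪B).card:ℝ) = (A.card:ℝ) + B.card := by exact_mod_cast hcardTU
      have h2 : ((A∪B).card:ℝ) ≤ k := by exact_mod_cast hunion
      have h3 : (I'.card:ℝ) = (A.card:ℝ) + B.card := by exact_mod_cast hcardI'
      linarith
    have h1 : ε * k ≤ (2-ε) * ((I'.card:ℝ) - k) := by nlinarith [hratio]
    have hXpos : 0 < (I'.card:ℝ) - k := by nlinarith [h1, hεk, hε2']
    have hX2 : ε * k / 2 ≤ (I'.card:ℝ) - k := by
      nlinarith [h1, mul_nonneg hε0.le hXpos.le]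
    have hmlb : ε * k / 2 ≤ (m:ℝ) := le_trans hX2 hmR
    have hm1 : 1 ≤ m := by
      by_contra h0
      push_neg at h0
      interval_cases m
      · simp at hmlb; linarith
    have hs1 : 1 ≤ s := by
      by_contra h0
      push_neg at h0
      have hs0 : s = 0 := by omega
      subst hs0
      have hcard1 := BadProof.stage_zero hd
      obtain ⟨t, ht⟩ := Finset.card_pos.mp (by omega : 0 < T.card)
      obtain ⟨htl, htr⟩ := hTI t ht
      have hss : ({Sum.inl t, Sum.inr t} : Finset (ℕ ⊕ ℕ)) ⊆ I' := by
        intro x hx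
        rcases Finset.mem_insert.mp hx with rfl | hx
        · exact htl
        · rw [Finset.mem_singleton.mp hx]; exact htr
      have := Finset.card_le_card hss
      rw [Finset.card_pair (by simp)] at this
      omega
    have hms : m ≤ s := by omega
    have hmsR : (m:ℝ) ≤ s := by exact_mod_cast hms
    have hlog : Real.log (badN k) = ((k:ℝ)+1) * Real.log 2 := by
      rw [badN, Real.log_pow]; push_cast; ring
    have hlog2 : Real.log 2 ≤ 1 := by
      have := Real.log_two_lt_d9; linarith
    have hlog2' : 0 ≤ Real.log 2 := Real.log_nonneg (by norm_num)
    have hlogN : Real.log (badN k) ≤ 2*k := by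
      rw [hlog]
      calc ((k:ℝ)+1) * Real.log 2 ≤ ((k:ℝ)+1) * 1 :=
            mul_le_mul_of_nonneg_left hlog2 (by linarith)
        _ ≤ 2*k := by linarith
    calc 1/4 * ε * Real.log (badN k) ≤ 1/4 * ε * (2*k) := by
          apply mul_le_mul_of_nonneg_left hlogN (by linarith)
      _ = ε * k / 2 := by ring
      _ ≤ (m:ℝ) := hmlb
      _ ≤ s := hmsR

/-- The hard instance admits a guillotine-separable packing into
the `N × N` knapsack, while for every `0 < ε < 1/2` there is a constant `c > 0`,
independent of `N`, such that every `s`-stage packing of a subset `I' ⊆ I` with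
`|I| ≤ (2 - ε)·|I'|` satisfies `s ≥ c · ε · log N`. -/
theorem stage_lower_bound :
    (∀ k : ℕ, 1 ≤ k →
      ∃ place, GuillotinePacking (badW k) (badH k) (badI k) place (knapsack (badN k))) ∧
    (∀ ε : ℝ, 0 < ε → ε < 1 / 2 →
      ∃ c : ℝ, 0 < c ∧
        ∀ k : ℕ, 1 ≤ k →
          ∀ I' ⊆ badI k, ∀ (s : ℕ) (place : ℕ ⊕ ℕ → Rect),
            IsPacking (badW k) (badH k) I' place (knapsack (badN k)) →
            KStageSep place s (knapsack (badN k)) I' →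
            ((badI k).card : ℝ) ≤ (2 - ε) * (I'.card : ℝ) →
            c * ε * Real.log (badN k) ≤ (s : ℝ)) := by
  exact stage_lower_bound'
end
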